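/- arXiv:1906.04600 — 7 statements merged into one kernel-verified Lean document; each statement's English description precedes it below -/
import Mathlib

section
/- Let d ≥ 1, let ε_1, ..., ε_d be positive reals and ϱ_1, ..., ϱ_d be positive reals, let λ > 0 and N > 0, and define the rational function J(z) = z - (λ/N) · Σ_{k=1}^d ϱ_k/(ε_k + z). Then for any v ≥ 0, the equation J(z) = J(v) has, besides z = v, exactly d further real roots v̂^1, ..., v̂^d which are interlaced with the poles of J: specifically -ε_{k+1} < v̂^k < -ε_k for k = 1, ..., d-1 and v̂^d < -ε_d. -/
open Finset

open Filter Set Topology in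
/-- Interlacing of the further real roots of `J(z) = J(v)` with the poles of `J`. -/
theorem stmt1 (d : ℕ) (hd : 1 ≤ d) (ε ϱ : Fin d → ℝ)
    (hε : ∀ k, 0 < ε k) (hεmono : StrictMono ε) (hϱ : ∀ k, 0 < ϱ k)
    (lam N : ℝ) (hlam : 0 < lam) (hN : 0 < N)
    (J : ℝ → ℝ) (hJ : ∀ z, J z = z - (lam / N) * ∑ k, ϱ k / (ε k + z))
    (v : ℝ) (hv : 0 ≤ v) :
    ∃ vh : Fin d → ℝ,
      (∀ k, J (vh k) = J v) ∧
      (∀ k, vh k ≠ v) ∧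
      Function.Injective vh ∧
      (∀ k, vh k < -ε k) ∧
      (∀ k : Fin d, ∀ h : k.val + 1 < d, -ε ⟨k.val + 1, h⟩ < vh k) ∧
      (∀ z : ℝ, (∀ k, z ≠ -ε k) → J z = J v → z = v ∨ ∃ k, z = vh k) := by
  have hdpos : 0 < d := hd
  haveI : Nonempty (Fin d) := Fin.pos_iff_nonempty.mp hdpos
  set c := lam / N with hc_def
  have hc : 0 < c := div_pos hlam hN
  -- strict monotonicity on components
  have key : ∀ x y : ℝ, x < y → (∀ j, 0 < (ε j + x) * (ε j + y)) → J x < J y := by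
    intro x y hxy hsign
    have hnex : ∀ j, ε j + x ≠ 0 := fun j h => by
      have := hsign j; rw [h, zero_mul] at this; exact lt_irrefl 0 this
    have hney : ∀ j, ε j + y ≠ 0 := fun j h => by
      have := hsign j; rw [h, mul_zero] at this; exact lt_irrefl 0 this
    have hterm : ∀ j : Fin d, ϱ j / (ε j + x) - ϱ j / (ε j + y)
        = (y - x) * (ϱ j / ((ε j + x) * (ε j + y))) := by
      intro j
      have h1 := hnex j
      have h2 := hney j
      field_simp
      ring
    have hsum : (∑ j, ϱ j / (ε j + x)) - (∑ j, ϱ j / (ε j + y))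
        = (y - x) * ∑ j, ϱ j / ((ε j + x) * (ε j + y)) := by
      rw [← Finset.sum_sub_distrib, Finset.mul_sum]
      exact Finset.sum_congr rfl fun j _ => hterm j
    have hP : 0 < ∑ j, ϱ j / ((ε j + x) * (ε j + y)) :=
      Finset.sum_pos (fun j _ => div_pos (hϱ j) (hsign j)) univ_nonempty
    rw [hJ x, hJ y]
    nlinarith [mul_pos hc (mul_pos (sub_pos.2 hxy) hP)]
  -- continuity away from poles
  have hJcont : ∀ s : Set ℝ, (∀ z ∈ s, ∀ j, ε j + z ≠ 0) → ContinuousOn J s := by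
    intro s hs
    have h : ContinuousOn (fun z => z - c * ∑ j, ϱ j / (ε j + z)) s := by
      refine continuousOn_id.sub (continuousOn_const.mul ?_)
      refine continuousOn_finset_sum _ fun j _ => ?_
      exact continuousOn_const.div (by fun_prop) (fun z hz => hs z hz j)
    exact h.congr fun z _ => hJ z
  have hne_ne : ∀ j k : Fin d, j ≠ k → ε j + -ε k ≠ 0 := by
    intro j k hjk h
    exact hjk (hεmono.injective (by linarith))
  -- behavior of the sum of the non-singular terms near a pole
  have tendsto_others : ∀ (k : Fin d) (b : ℝ), (∀ j ∈ univ.erase k, ε j + b ≠ 0) →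
      Tendsto (fun z => ∑ j ∈ univ.erase k, ϱ j / (ε j + z)) (𝓝 b)
        (𝓝 (∑ j ∈ univ.erase k, ϱ j / (ε j + b))) := by
    intro k b hb
    refine tendsto_finset_sum _ fun j hj => ?_
    exact Tendsto.div tendsto_const_nhds
      (Continuous.tendsto (by fun_prop : Continuous fun z : ℝ => ε j + z) b) (hb j hj)
  have hsplit : ∀ (k : Fin d) (z : ℝ),
      ∑ j, ϱ j / (ε j + z) = ϱ k / (ε k + z) + ∑ j ∈ univ.erase k, ϱ j / (ε j + z) := by
    intro k z
    exact (Finset.add_sum_erase _ _ (mem_univ k)).symm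
  -- J tends to +∞ from the left of each pole
  have pole_left : ∀ k : Fin d, Tendsto J (𝓝[<] (-ε k)) atTop := by
    intro k
    have h1 : Tendsto (fun z : ℝ => -(ε k + z)) (𝓝[<] (-ε k)) (𝓝[>] 0) := by
      rw [tendsto_nhdsWithin_iff]
      constructor
      · have h : Tendsto (fun z : ℝ => -(ε k + z)) (𝓝 (-ε k)) (𝓝 (-(ε k + -ε k))) :=
          Continuous.tendsto (by fun_prop) _
        simpa using h.mono_left nhdsWithin_le_nhds
      · filter_upwards [self_mem_nhdsWithin] with z hz
        simp only [Set.mem_Iio] at hz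
        simp only [Set.mem_Ioi]
        linarith
    have h2 : Tendsto (fun z : ℝ => ϱ k * (-(ε k + z))⁻¹) (𝓝[<] (-ε k)) atTop :=
      (tendsto_inv_nhdsGT_zero.comp h1).const_mul_atTop (hϱ k)
    have h3 : Tendsto (fun z : ℝ => ϱ k / (ε k + z)) (𝓝[<] (-ε k)) atBot := by
      refine (tendsto_neg_atTop_atBot.comp h2).congr fun z => ?_
      show -(ϱ k * (-(ε k + z))⁻¹) = ϱ k / (ε k + z)
      rw [inv_neg, div_eq_mul_inv]
      ring
    have h4 : Tendsto (fun z : ℝ => ∑ j, ϱ j / (ε j + z)) (𝓝[<] (-ε k)) atBot := by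
      refine (Filter.Tendsto.atBot_add h3 (((tendsto_others k (-ε k)
        (fun j hj => hne_ne j k (Finset.mem_erase.1 hj).1)).mono_left
          nhdsWithin_le_nhds))).congr fun z => ?_
      exact (hsplit k z).symm
    have h5 : Tendsto (fun z : ℝ => z + -(c * ∑ j, ϱ j / (ε j + z))) (𝓝[<] (-ε k)) atTop := by
      refine Filter.Tendsto.add_atTop (tendsto_id.mono_left nhdsWithin_le_nhds) ?_
      exact tendsto_neg_atBot_atTop.comp (h4.const_mul_atBot hc)
    refine h5.congr fun z => ?_
    rw [hJ z, sub_eq_add_neg]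
  -- J tends to -∞ from the right of each pole
  have pole_right : ∀ k : Fin d, Tendsto J (𝓝[>] (-ε k)) atBot := by
    intro k
    have h1 : Tendsto (fun z : ℝ => ε k + z) (𝓝[>] (-ε k)) (𝓝[>] 0) := by
      rw [tendsto_nhdsWithin_iff]
      constructor
      · have h : Tendsto (fun z : ℝ => ε k + z) (𝓝 (-ε k)) (𝓝 (ε k + -ε k)) :=
          Continuous.tendsto (by fun_prop) _
        simpa using h.mono_left nhdsWithin_le_nhds
      · filter_upwards [self_mem_nhdsWithin] with z hz
        simp only [Set.mem_Ioi] at hz ⊢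
        linarith
    have h2 : Tendsto (fun z : ℝ => ϱ k * (ε k + z)⁻¹) (𝓝[>] (-ε k)) atTop :=
      (tendsto_inv_nhdsGT_zero.comp h1).const_mul_atTop (hϱ k)
    have h3 : Tendsto (fun z : ℝ => ϱ k / (ε k + z)) (𝓝[>] (-ε k)) atTop := by
      refine h2.congr fun z => ?_
      rw [div_eq_mul_inv]
    have h4 : Tendsto (fun z : ℝ => ∑ j, ϱ j / (ε j + z)) (𝓝[>] (-ε k)) atTop := by
      refine (Filter.Tendsto.atTop_add h3 (((tendsto_others k (-ε k)
        (fun j hj => hne_ne j k (Finset.mem_erase.1 hj).1)).mono_left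
          nhdsWithin_le_nhds))).congr fun z => ?_
      exact (hsplit k z).symm
    have h5 : Tendsto (fun z : ℝ => z + -(c * ∑ j, ϱ j / (ε j + z))) (𝓝[>] (-ε k)) atBot := by
      refine Filter.Tendsto.add_atBot (tendsto_id.mono_left nhdsWithin_le_nhds) ?_
      exact tendsto_neg_atTop_atBot.comp (h4.const_mul_atTop hc)
    refine h5.congr fun z => ?_
    rw [hJ z, sub_eq_add_neg]
  -- J tends to -∞ at -∞
  have tendsto_bot : Tendsto J atBot atBot := by
    have hS : Tendsto (fun z : ℝ => ∑ j, ϱ j / (ε j + z)) atBot (𝓝 0) := by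
      have : Tendsto (fun z : ℝ => ∑ j, ϱ j / (ε j + z)) atBot (𝓝 (∑ j : Fin d, (0:ℝ))) := by
        refine tendsto_finset_sum _ fun j _ => ?_
        have h1 : Tendsto (fun z : ℝ => -(ε j + z)) atBot atTop := by
          refine tendsto_neg_atBot_atTop.comp ?_
          exact tendsto_atBot_add_const_left _ _ tendsto_id
        have h2 : Tendsto (fun z : ℝ => ϱ j / (-(ε j + z))) atBot (𝓝 0) :=
          h1.const_div_atTop (ϱ j)
        have h3 := h2.neg
        rw [neg_zero] at h3
        refine h3.congr fun z => ?_
        rw [div_neg, neg_neg]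
      simpa using this
    have h5 : Tendsto (fun z : ℝ => z + -(c * ∑ j, ϱ j / (ε j + z))) atBot atBot := by
      refine Filter.Tendsto.atBot_add (C := 0) tendsto_id ?_
      have := (hS.const_mul c).neg
      simpa using this
    refine h5.congr fun z => ?_
    rw [hJ z, sub_eq_add_neg]
  -- existence of a root in an interval with prescribed values
  have exists_root : ∀ (s : Set ℝ) (x₁ x₂ : ℝ), x₁ < x₂ → Icc x₁ x₂ ⊆ s →
      (∀ z ∈ s, ∀ j, ε j + z ≠ 0) → J x₁ < J v → J v < J x₂ →
      ∃ x ∈ Ioo x₁ x₂, J x = J v := by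
    intro s x₁ x₂ h12 hsub hs h1 h2
    obtain ⟨x, hx, hxe⟩ := intermediate_value_Ioo h12.le ((hJcont s hs).mono hsub) ⟨h1, h2⟩
    exact ⟨x, hx, hxe⟩
  -- main existence per index
  have main : ∀ k : Fin d, ∃ x : ℝ, J x = J v ∧ x < -ε k ∧
      ∀ h : k.val + 1 < d, -ε ⟨k.val + 1, h⟩ < x := by
    intro k
    by_cases hk : k.val + 1 < d
    · set k' : Fin d := ⟨k.val + 1, hk⟩ with hk'def
      have hk'val : k'.val = k.val + 1 := rfl
      have hkk' : k < k' := by simp [Fin.lt_def, hk'val]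
      have hab : -ε k' < -ε k := neg_lt_neg (hεmono hkk')
      have hnopole : ∀ z ∈ Ioo (-ε k') (-ε k), ∀ j, ε j + z ≠ 0 := by
        intro z hz j h
        have hzj : z = -ε j := by linarith
        rcases lt_or_ge j k' with hj | hj
        · have hjk : j ≤ k := by
            have := Fin.lt_def.1 hj
            exact Fin.le_def.2 (by omega)
          have : -ε k ≤ -ε j := neg_le_neg (hεmono.monotone hjk)
          have := hz.2
          linarith
        · have : -ε j ≤ -ε k' := neg_le_neg (hεmono.monotone hj)
          have := hz.1
          linarith
      obtain ⟨x₂, hx₂J, hx₂mem⟩ :=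
        (((pole_left k).eventually_gt_atTop (J v)).and
          (eventually_of_mem (Ioo_mem_nhdsLT hab) fun z hz => hz)).exists
      obtain ⟨x₁, hx₁J, hx₁mem⟩ :=
        (((pole_right k').eventually_lt_atBot (J v)).and
          (eventually_of_mem (Ioo_mem_nhdsGT hx₂mem.1) fun z hz => hz)).exists
      obtain ⟨x, hx, hxe⟩ := exists_root (Ioo (-ε k') (-ε k)) x₁ x₂ hx₁mem.2
        (fun z hz => ⟨lt_of_lt_of_le hx₁mem.1 hz.1, lt_of_le_of_lt hz.2 hx₂mem.2⟩)
        hnopole hx₁J hx₂J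
      refine ⟨x, hxe, lt_trans hx.2 hx₂mem.2, fun h => ?_⟩
      have : (⟨k.val + 1, h⟩ : Fin d) = k' := rfl
      rw [this]
      exact lt_trans hx₁mem.1 hx.1
    · have hnopole : ∀ z ∈ Iio (-ε k), ∀ j, ε j + z ≠ 0 := by
        intro z hz j h
        have hjk : j ≤ k := Fin.le_def.2 (by omega)
        have : -ε k ≤ -ε j := neg_le_neg (hεmono.monotone hjk)
        simp only [Set.mem_Iio] at hz
        linarith
      obtain ⟨x₂, hx₂J, hx₂mem⟩ :=
        (((pole_left k).eventually_gt_atTop (J v)).and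
          (eventually_of_mem self_mem_nhdsWithin fun z hz => hz)).exists
      simp only [Set.mem_Iio] at hx₂mem
      obtain ⟨x₁, hx₁J, hx₁mem⟩ :=
        ((tendsto_bot.eventually_lt_atBot (J v)).and (eventually_lt_atBot x₂)).exists
      obtain ⟨x, hx, hxe⟩ := exists_root (Iio (-ε k)) x₁ x₂ hx₁mem
        (fun z hz => lt_of_le_of_lt hz.2 hx₂mem) hnopole hx₁J hx₂J
      exact ⟨x, hxe, lt_trans hx.2 hx₂mem, fun h => absurd h hk⟩
  choose vh hvhJ hvhlt hvhgt using main
  -- bounds and basic facts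
  have hvpos : ∀ j : Fin d, -ε j < v := fun j => lt_of_lt_of_le (by linarith [hε j]) hv
  have hvhne : ∀ k, vh k ≠ v := by
    intro k h
    have := hvhlt k
    have := hvpos k
    linarith
  have hanti : ∀ k l : Fin d, k < l → vh l < vh k := by
    intro k l hkl
    have hk : k.val + 1 < d := by
      have := Fin.lt_def.1 hkl
      omega
    have h1 : -ε ⟨k.val + 1, hk⟩ < vh k := hvhgt k hk
    have h2 : vh l < -ε l := hvhlt l
    have h3 : ε ⟨k.val + 1, hk⟩ ≤ ε l := hεmono.monotone (Fin.le_def.2 (by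
      show k.val + 1 ≤ l.val
      have := Fin.lt_def.1 hkl; omega))
    linarith
  have hinj : Function.Injective vh := by
    intro k l h
    by_contra hne
    rcases lt_or_gt_of_ne hne with hlt | hlt
    · exact absurd h (ne_of_gt (hanti k l hlt))
    · exact absurd h (ne_of_lt (hanti l k hlt))
  refine ⟨vh, hvhJ, hvhne, hinj, hvhlt, hvhgt, ?_⟩
  -- completeness
  intro z hz hJz
  by_cases hT : ∃ j, z < -ε j
  · right
    set T : Finset (Fin d) := univ.filter (fun j => z < -ε j) with hTdef
    have hTne : T.Nonempty := by
      obtain ⟨j, hj⟩ := hT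
      exact ⟨j, by simp [hTdef, hj]⟩
    set k := T.max' hTne with hkdef
    have hkmem : z < -ε k := by
      have := T.max'_mem hTne
      simp [hTdef] at this
      exact this
    have hgt : ∀ j, k < j → -ε j < z := by
      intro j hj
      by_contra hcon
      push_neg at hcon
      have hzj : z < -ε j := lt_of_le_of_ne hcon (hz j)
      have : j ∈ T := by simp [hTdef, hzj]
      exact absurd (T.le_max' j this) (not_le.2 hj)
    refine ⟨k, ?_⟩
    have hsign : ∀ j, 0 < (ε j + z) * (ε j + vh k) := by
      intro j
      rcases le_or_gt j k with hj | hj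
      · have h1 : ε j ≤ ε k := hεmono.monotone hj
        have h2 : vh k < -ε k := hvhlt k
        have h3 : ε j + z < 0 := by linarith
        have h4 : ε j + vh k < 0 := by linarith
        exact mul_pos_of_neg_of_neg h3 h4
      · have hk1 : k.val + 1 < d := by
          have := Fin.lt_def.1 hj
          omega
        have hkj : (⟨k.val + 1, hk1⟩ : Fin d) ≤ j := Fin.le_def.2 (by
          show k.val + 1 ≤ j.val
          have := Fin.lt_def.1 hj; omega)
        have h1 : ε ⟨k.val + 1, hk1⟩ ≤ ε j := hεmono.monotone hkj
        have h2 : -ε ⟨k.val + 1, hk1⟩ < vh k := hvhgt k hk1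
        have h3 : -ε j < z := hgt j hj
        have h4 : 0 < ε j + z := by linarith
        have h5 : 0 < ε j + vh k := by linarith
        exact mul_pos h4 h5
    rcases lt_trichotomy z (vh k) with h | h | h
    · have := key z (vh k) h hsign
      rw [hJz, hvhJ k] at this
      exact absurd this (lt_irrefl _)
    · exact h
    · have := key (vh k) z h (fun j => by have := hsign j; linarith [mul_comm (ε j + z) (ε j + vh k)])
      rw [hJz, hvhJ k] at this
      exact absurd this (lt_irrefl _)
  · left
    push_neg at hT
    have hzgt : ∀ j, -ε j < z := fun j => lt_of_le_of_ne (hT j) (Ne.symm (hz j))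
    have hsign : ∀ j, 0 < (ε j + z) * (ε j + v) := by
      intro j
      have h1 : 0 < ε j + z := by linarith [hzgt j]
      have h2 : 0 < ε j + v := by linarith [hvpos j]
      exact mul_pos h1 h2
    rcases lt_trichotomy z v with h | h | h
    · have := key z v h hsign
      rw [hJz] at this
      exact absurd this (lt_irrefl _)
    · exact h
    · have := key v z h (fun j => by have := hsign j; linarith [mul_comm (ε j + z) (ε j + v)])
      rw [hJz] at this
      exact absurd this (lt_irrefl _)
end

section
/- Let μ > 0 and let ρ : [ν, Λ²] → ℝ be continuous and nonnegative with ν > -μ²/2. Define for z in the right half-plane R_μ = {z ∈ ℂ : Re(z) > -μ²/2} the function J(z) = z - λ ∫_ν^{Λ²} ρ(t)/(t + μ² + z) dt. If λ ∈ ℂ satisfies |λ| < (∫_ν^{Λ²} ρ(t)/(t + μ²/2)² dt)^{-1}, then J is injective on R_μ. -/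
open intervalIntegral

/-- Injectivity of `J(z) = z - λ ∫ ρ(t)/(t+μ²+z) dt` on the right half-plane
`Re z > -μ²/2` for `|λ|` small (D = 0 case of Lemma 3.3(1)). -/
theorem stmt3 (μ ν L2 : ℝ) (hμ : 0 < μ) (hν : -μ ^ 2 / 2 < ν) (hνL : ν ≤ L2)
    (ρ : ℝ → ℝ) (hρcont : ContinuousOn ρ (Set.Icc ν L2))
    (hρpos : ∀ t ∈ Set.Icc ν L2, 0 ≤ ρ t)
    (lam : ℂ)
    (hlam : ‖lam‖ < (∫ t in ν..L2, ρ t / (t + μ ^ 2 / 2) ^ 2)⁻¹)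
    (J : ℂ → ℂ)
    (hJ : ∀ z, J z = z - lam * ∫ t in ν..L2, (ρ t : ℂ) / ((t : ℂ) + (μ : ℂ) ^ 2 + z)) :
    Set.InjOn J {z : ℂ | -μ ^ 2 / 2 < z.re} := by
  intro z0 hz0 z1 hz1 hJeq
  simp only [Set.mem_setOf_eq] at hz0 hz1
  by_contra hne
  set M := ∫ t in ν..L2, ρ t / (t + μ ^ 2 / 2) ^ 2 with hMdef
  have hμ2 : 0 < μ ^ 2 := by positivity
  have hpos : ∀ t ∈ Set.Icc ν L2, 0 < t + μ ^ 2 / 2 := fun t ht => by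
    have := ht.1; nlinarith
  have hre : ∀ z : ℂ, -μ ^ 2 / 2 < z.re → ∀ t ∈ Set.Icc ν L2,
      t + μ ^ 2 / 2 ≤ ((t : ℂ) + (μ : ℂ) ^ 2 + z).re := by
    intro z hz t ht
    have h1 : ((t : ℂ) + (μ : ℂ) ^ 2 + z).re = t + μ ^ 2 + z.re := by
      simp [Complex.add_re, ← Complex.ofReal_pow]
    rw [h1]; linarith
  have hne0 : ∀ z : ℂ, -μ ^ 2 / 2 < z.re → ∀ t ∈ Set.Icc ν L2,
      ((t : ℂ) + (μ : ℂ) ^ 2 + z) ≠ 0 := by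
    intro z hz t ht h
    have h1 := hre z hz t ht
    have h2 := hpos t ht
    rw [h, Complex.zero_re] at h1; linarith
  have hnorm : ∀ z : ℂ, -μ ^ 2 / 2 < z.re → ∀ t ∈ Set.Icc ν L2,
      t + μ ^ 2 / 2 ≤ ‖(t : ℂ) + (μ : ℂ) ^ 2 + z‖ := by
    intro z hz t ht
    exact le_trans (hre z hz t ht) (Complex.re_le_norm _)
  have hcρ : ContinuousOn (fun t : ℝ => (ρ t : ℂ)) (Set.Icc ν L2) :=
    Complex.continuous_ofReal.comp_continuousOn hρcont
  have hclin : ∀ z : ℂ, ContinuousOn (fun t : ℝ => (t : ℂ) + (μ : ℂ) ^ 2 + z)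
      (Set.Icc ν L2) :=
    fun z => ((Complex.continuous_ofReal.add continuous_const).add continuous_const).continuousOn
  have hintz : ∀ z : ℂ, -μ ^ 2 / 2 < z.re →
      IntervalIntegrable (fun t : ℝ => (ρ t : ℂ) / ((t : ℂ) + (μ : ℂ) ^ 2 + z))
        MeasureTheory.volume ν L2 := by
    intro z hz
    apply ContinuousOn.intervalIntegrable
    rw [Set.uIcc_of_le hνL]
    exact hcρ.div (hclin z) (hne0 z hz)
  have hcK : ContinuousOn (fun t : ℝ =>
      (ρ t : ℂ) / (((t : ℂ) + (μ : ℂ) ^ 2 + z0) * ((t : ℂ) + (μ : ℂ) ^ 2 + z1)))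
      (Set.Icc ν L2) := by
    apply hcρ.div ((hclin z0).mul (hclin z1))
    intro t ht
    exact mul_ne_zero (hne0 z0 hz0 t ht) (hne0 z1 hz1 t ht)
  have hintK : IntervalIntegrable (fun t : ℝ =>
      (ρ t : ℂ) / (((t : ℂ) + (μ : ℂ) ^ 2 + z0) * ((t : ℂ) + (μ : ℂ) ^ 2 + z1)))
      MeasureTheory.volume ν L2 := by
    apply ContinuousOn.intervalIntegrable
    rw [Set.uIcc_of_le hνL]; exact hcK
  have hintM : IntervalIntegrable (fun t : ℝ => ρ t / (t + μ ^ 2 / 2) ^ 2)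
      MeasureTheory.volume ν L2 := by
    apply ContinuousOn.intervalIntegrable
    rw [Set.uIcc_of_le hνL]
    apply hρcont.div (((continuous_id.add continuous_const).pow 2).continuousOn)
    intro t ht
    exact pow_ne_zero 2 (hpos t ht).ne'
  set K := ∫ t in ν..L2,
      (ρ t : ℂ) / (((t : ℂ) + (μ : ℂ) ^ 2 + z0) * ((t : ℂ) + (μ : ℂ) ^ 2 + z1)) with hKdef
  have hdiff : (∫ t in ν..L2, (ρ t : ℂ) / ((t : ℂ) + (μ : ℂ) ^ 2 + z1))
      - (∫ t in ν..L2, (ρ t : ℂ) / ((t : ℂ) + (μ : ℂ) ^ 2 + z0)) = (z0 - z1) * K := by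
    rw [hKdef, ← intervalIntegral.integral_sub (hintz z1 hz1) (hintz z0 hz0),
      ← intervalIntegral.integral_const_mul]
    apply intervalIntegral.integral_congr
    intro t ht
    rw [Set.uIcc_of_le hνL] at ht
    have h0 := hne0 z0 hz0 t ht
    have h1 := hne0 z1 hz1 t ht
    field_simp
    ring
  -- algebraic identity
  have heq : (z1 - z0) * (1 + lam * K) = 0 := by
    rw [hJ z0, hJ z1] at hJeq
    linear_combination lam * hdiff - hJeq
  have hsub : z1 - z0 ≠ 0 := sub_ne_zero.mpr (fun h => hne h.symm)
  have hone : 1 + lam * K = 0 := by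
    rcases mul_eq_zero.mp heq with h | h
    · exact absurd h hsub
    · exact h
  have hlamK : lam * K = -1 := by linear_combination hone
  -- norm bound
  have hKle : ‖K‖ ≤ M := by
    calc ‖K‖ ≤ ∫ t in ν..L2, ‖(ρ t : ℂ) /
        (((t : ℂ) + (μ : ℂ) ^ 2 + z0) * ((t : ℂ) + (μ : ℂ) ^ 2 + z1))‖ :=
          intervalIntegral.norm_integral_le_integral_norm hνL
    _ ≤ M := by
        apply intervalIntegral.integral_mono_on hνL hintK.norm hintM
        intro t ht
        have h0 := hnorm z0 hz0 t ht
        have h1 := hnorm z1 hz1 t ht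
        have hp := hpos t ht
        have hρt := hρpos t ht
        rw [norm_div, norm_mul, Complex.norm_real, Real.norm_eq_abs, abs_of_nonneg hρt]
        have hprod : (t + μ ^ 2 / 2) ^ 2 ≤ ‖(t : ℂ) + (μ : ℂ) ^ 2 + z0‖ *
            ‖(t : ℂ) + (μ : ℂ) ^ 2 + z1‖ := by
          calc (t + μ ^ 2 / 2) ^ 2 = (t + μ ^ 2 / 2) * (t + μ ^ 2 / 2) := sq (t + μ ^ 2 / 2)
          _ ≤ _ := mul_le_mul h0 h1 hp.le (hp.le.trans h0)
        exact div_le_div_of_nonneg_left hρt (pow_pos hp 2) hprod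
  have hM0 : 0 < M := by
    rcases lt_or_ge 0 M with h | h
    · exact h
    · have h2 : M⁻¹ ≤ 0 := inv_nonpos.mpr h
      linarith [norm_nonneg lam]
  have hlt : ‖lam‖ * ‖K‖ < 1 :=
    calc ‖lam‖ * ‖K‖ ≤ ‖lam‖ * M := mul_le_mul_of_nonneg_left hKle (norm_nonneg _)
    _ < M⁻¹ * M := mul_lt_mul_of_pos_right hlam hM0
    _ = 1 := inv_mul_cancel₀ hM0.ne'
  have h1 : ‖lam * K‖ = 1 := by rw [hlamK]; simp
  rw [norm_mul] at h1
  linarith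
end

section
/- Let μ > 0, ρ : [ν, Λ²] → ℝ continuous and nonnegative with ν > -μ²/2, and λ real with |λ| < (∫_ν^{Λ²} ρ(t)/(t + μ²/2)² dt)^{-1}. Define J(z) = z - λ ∫_ν^{Λ²} ρ(t)/(t + μ² + z) dt on the half-plane Re(z) > -μ²/2. Then for every z = x + iy in this half-plane, Im(J(z)) has the same sign as y = Im(z) (and vanishes iff y = 0). -/
open intervalIntegral

/-- For real `λ` with `|λ|` small, `Im J(z)` has the same sign as `Im z`
on the half-plane `Re z > -μ²/2` (D = 0 case of Lemma 3.3(2)). -/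
theorem stmt4 (μ ν L2 : ℝ) (hμ : 0 < μ) (hν : -μ ^ 2 / 2 < ν) (hνL : ν ≤ L2)
    (ρ : ℝ → ℝ) (hρcont : ContinuousOn ρ (Set.Icc ν L2))
    (hρpos : ∀ t ∈ Set.Icc ν L2, 0 ≤ ρ t)
    (lam : ℝ)
    (hlam : |lam| < (∫ t in ν..L2, ρ t / (t + μ ^ 2 / 2) ^ 2)⁻¹)
    (J : ℂ → ℂ)
    (hJ : ∀ z, J z = z - (lam : ℂ) * ∫ t in ν..L2, (ρ t : ℂ) / ((t : ℂ) + (μ : ℂ) ^ 2 + z)) :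
    ∀ z : ℂ, -μ ^ 2 / 2 < z.re →
      (0 < z.im → 0 < (J z).im) ∧ (z.im < 0 → (J z).im < 0) ∧ ((J z).im = 0 ↔ z.im = 0) := by
  set I := ∫ t in ν..L2, ρ t / (t + μ ^ 2 / 2) ^ 2 with hIdef
  have hIpos : 0 < I := by
    by_contra h
    push_neg at h
    have : I⁻¹ ≤ 0 := inv_nonpos.mpr h
    linarith [abs_nonneg lam]
  have hlamI : |lam| * I < 1 := by
    calc |lam| * I < I⁻¹ * I := mul_lt_mul_of_pos_right hlam hIpos
    _ = 1 := inv_mul_cancel₀ (ne_of_gt hIpos)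
  have huIcc : Set.uIcc ν L2 = Set.Icc ν L2 := Set.uIcc_of_le hνL
  -- integrability of the I-integrand
  have hIint : IntervalIntegrable (fun t => ρ t / (t + μ ^ 2 / 2) ^ 2) MeasureTheory.volume ν L2 := by
    apply ContinuousOn.intervalIntegrable
    rw [huIcc]
    apply hρcont.div ((continuousOn_id.add continuousOn_const).pow 2)
    intro t ht
    have : 0 < t + μ ^ 2 / 2 := by have := ht.1; linarith
    exact pow_ne_zero _ (ne_of_gt this)
  intro z hz
  set x := z.re with hxdef
  set y := z.im with hydef
  have hre : ∀ t : ℝ, ((t : ℂ) + (μ : ℂ) ^ 2 + z).re = t + μ ^ 2 + x := by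
    intro t; simp [Complex.add_re, ← Complex.ofReal_pow]; rfl
  have him : ∀ t : ℝ, ((t : ℂ) + (μ : ℂ) ^ 2 + z).im = y := by
    intro t; simp [Complex.add_im, ← Complex.ofReal_pow]; rfl
  have hwpos : ∀ t ∈ Set.Icc ν L2, 0 < t + μ ^ 2 + x := by
    intro t ht; have := ht.1; nlinarith [sq_nonneg μ]
  have hhalf : ∀ t ∈ Set.Icc ν L2, 0 < t + μ ^ 2 / 2 := by
    intro t ht; have := ht.1; linarith
  have hne : ∀ t ∈ Set.Icc ν L2, ((t : ℂ) + (μ : ℂ) ^ 2 + z) ≠ 0 := by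
    intro t ht h0
    have := hwpos t ht
    rw [← hre t, h0] at this
    simp at this
  -- integrability of the complex integrand
  have hcint : IntervalIntegrable (fun t : ℝ => (ρ t : ℂ) / ((t : ℂ) + (μ : ℂ) ^ 2 + z))
      MeasureTheory.volume ν L2 := by
    apply ContinuousOn.intervalIntegrable
    rw [huIcc]
    apply ContinuousOn.div
    · exact Complex.continuous_ofReal.comp_continuousOn hρcont
    · exact (Complex.continuous_ofReal.continuousOn.add continuousOn_const).add continuousOn_const
    · exact hne
  -- the real kernel
  set K := ∫ t in ν..L2, ρ t / ((t + μ ^ 2 + x) ^ 2 + y ^ 2) with hKdef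
  have hKint : IntervalIntegrable (fun t => ρ t / ((t + μ ^ 2 + x) ^ 2 + y ^ 2))
      MeasureTheory.volume ν L2 := by
    apply ContinuousOn.intervalIntegrable
    rw [huIcc]
    apply hρcont.div
    · exact (((continuousOn_id.add continuousOn_const).add continuousOn_const).pow 2).add
        continuousOn_const
    · intro t ht
      have := hwpos t ht
      positivity
  -- compute the imaginary part of the integral
  have him_int : (∫ t in ν..L2, (ρ t : ℂ) / ((t : ℂ) + (μ : ℂ) ^ 2 + z)).im = -y * K := by
    have h1 : (∫ t in ν..L2, (ρ t : ℂ) / ((t : ℂ) + (μ : ℂ) ^ 2 + z)).im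
        = ∫ t in ν..L2, ((ρ t : ℂ) / ((t : ℂ) + (μ : ℂ) ^ 2 + z)).im :=
      (Complex.imCLM.intervalIntegral_comp_comm hcint).symm
    rw [h1]
    have h2 : ∀ t ∈ Set.uIcc ν L2, ((ρ t : ℂ) / ((t : ℂ) + (μ : ℂ) ^ 2 + z)).im
        = -y * (ρ t / ((t + μ ^ 2 + x) ^ 2 + y ^ 2)) := by
      intro t ht
      rw [huIcc] at ht
      rw [Complex.div_im, Complex.normSq_apply, hre t, him t]
      simp only [Complex.ofReal_re, Complex.ofReal_im]
      rw [show (t + μ ^ 2 + x) * (t + μ ^ 2 + x) + y * y = (t + μ ^ 2 + x) ^ 2 + y ^ 2 from by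
        ring]
      ring
    rw [intervalIntegral.integral_congr h2, intervalIntegral.integral_const_mul]
  have hJim : (J z).im = y * (1 + lam * K) := by
    rw [hJ z, Complex.sub_im, Complex.mul_im, him_int]
    simp only [Complex.ofReal_re, Complex.ofReal_im]
    ring
  -- bounds on K
  have hKnonneg : 0 ≤ K := by
    apply intervalIntegral.integral_nonneg hνL
    intro t ht
    have := hwpos t ht
    have := hρpos t ht
    positivity
  have hKle : K ≤ I := by
    apply intervalIntegral.integral_mono_on hνL hKint hIint
    intro t ht
    have h1 := hhalf t ht
    have h2 := hwpos t ht
    have h3 : t + μ ^ 2 / 2 ≤ t + μ ^ 2 + x := by nlinarith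
    apply div_le_div_of_nonneg_left (hρpos t ht) (by positivity)
    nlinarith
  have hbound : 0 < 1 + lam * K := by
    have h1 : |lam * K| ≤ |lam| * I := by
      rw [abs_mul, abs_of_nonneg hKnonneg]
      exact mul_le_mul_of_nonneg_left hKle (abs_nonneg lam)
    have := neg_abs_le (lam * K)
    linarith
  rw [hJim]
  refine ⟨fun hy => mul_pos hy hbound, fun hy => mul_neg_of_neg_of_pos hy hbound, ?_⟩
  constructor
  · intro h
    rcases mul_eq_zero.mp h with h | h
    · exact h
    · linarith
  · intro h; rw [h, zero_mul]
end

section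
/- Let φ be a complex function analytic at 0 with φ(0) ≠ 0, and let f(w) = w/φ(w). Then f has an analytic local inverse g at 0 with f(g(z)) = z, given by the convergent power series g(z) = Σ_{n≥1} (z^n/n!) · (d^{n-1}/dw^{n-1})|_{w=0} (φ(w))^n. -/
open Metric Complex Set Filter intervalIntegral NNReal

lemma lagA {f : ℂ → ℂ} {r : ℝ} (hr : 0 < r)
    (hfa : ∀ w ∈ closedBall (0:ℂ) r, AnalyticAt ℂ f w)
    (hinj : Set.InjOn f (closedBall (0:ℂ) r))
    (hder : ∀ w ∈ closedBall (0:ℂ) r, deriv f w ≠ 0)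
    {z a : ℂ} (ha : a ∈ ball (0:ℂ) r) (hfaz : f a = z) :
    (∮ w in C(0, r), (f w - z)⁻¹ • (w * deriv f w)) = (2 * Real.pi * I : ℂ) • a := by
  have ha' : a ∈ closedBall (0:ℂ) r := ball_subset_closedBall ha
  have hfa' : AnalyticOnNhd ℂ f (closedBall (0:ℂ) r) := hfa
  -- analyticity of dslope f a on the closed ball
  have hdsa : ∀ w ∈ closedBall (0:ℂ) r, AnalyticAt ℂ (dslope f a) w := by
    intro w hw
    rcases eq_or_ne w a with rfl | hne
    · obtain ⟨p, hp⟩ := hfa w hw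
      exact hp.has_fpower_series_dslope_fslope.analyticAt
    · have h1 : AnalyticAt ℂ (fun b => (f b - f a) / (b - a)) w :=
        (((hfa w hw).sub analyticAt_const).div ((analyticAt_id).sub analyticAt_const)
          (sub_ne_zero.2 hne))
      have h2 : slope f a =ᶠ[nhds w] fun b => (f b - f a) / (b - a) := by
        filter_upwards with b
        rw [slope_def_field]
      exact (h1.congr h2.symm).congr (dslope_eventuallyEq_slope_of_ne f hne).symm
  -- nonvanishing of dslope f a on the closed ball
  have hds0 : ∀ w ∈ closedBall (0:ℂ) r, dslope f a w ≠ 0 := by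
    intro w hw
    rcases eq_or_ne w a with rfl | hne
    · rw [dslope_same]; exact hder w hw
    · rw [dslope_of_ne f hne, slope_def_field]
      exact div_ne_zero (sub_ne_zero.2 fun h => hne (hinj hw ha' h)) (sub_ne_zero.2 hne)
  set h : ℂ → ℂ := fun w => (w * deriv f w) * (dslope f a w)⁻¹ with hh_def
  have hh : DiffContOnCl ℂ h (ball (0:ℂ) r) := by
    apply DifferentiableOn.diffContOnCl
    rw [closure_ball (0:ℂ) hr.ne']
    intro w hw
    exact (((analyticAt_id.mul ((hfa'.deriv) w hw)).mul
      ((hdsa w hw).inv (hds0 w hw))).differentiableAt).differentiableWithinAt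
  have key := hh.circleIntegral_sub_inv_smul ha
  have hha : h a = a := by
    rw [hh_def]
    simp only [dslope_same]
    field_simp [hder a ha']
  rw [hha] at key
  rw [← key]
  apply circleIntegral.integral_congr hr.le
  intro w hw
  have hwr : ‖w‖ = r := by simpa using hw
  have hwa : w ≠ a := by
    intro h'
    subst h'
    rw [mem_ball, dist_zero_right] at ha
    exact (ne_of_lt ha) hwr
  have hwcb : w ∈ closedBall (0:ℂ) r := sphere_subset_closedBall hw
  have hfw : f w - z ≠ 0 := by
    rw [← hfaz]
    exact sub_ne_zero.2 fun h' => hwa (hinj hwcb ha' h')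
  have hds : dslope f a w = (f w - f a) / (w - a) := by
    rw [dslope_of_ne f hwa, slope_def_field]
  simp only [hh_def, smul_eq_mul, hds, hfaz]
  field_simp [sub_ne_zero.2 hwa]

lemma lagB {f : ℂ → ℂ} {r : ℝ} (hr : 0 < r)
    (hfa : ∀ w ∈ closedBall (0:ℂ) r, AnalyticAt ℂ f w)
    {m : ℝ} (hm : 0 < m) (hmf : ∀ w ∈ sphere (0:ℂ) r, m ≤ ‖f w‖)
    {z : ℂ} (hz : ‖z‖ < m) :
    HasSum (fun n : ℕ => z ^ n • ∮ w in C(0, r), ((f w) ^ (n+1))⁻¹ • (w * deriv f w))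
      (∮ w in C(0, r), (f w - z)⁻¹ • (w * deriv f w)) := by
  have hfa' : AnalyticOnNhd ℂ f (closedBall (0:ℂ) r) := hfa
  have hcm : ∀ θ : ℝ, circleMap 0 r θ ∈ sphere (0:ℂ) r := fun θ => circleMap_mem_sphere _ hr.le _
  have hcb : ∀ θ : ℝ, circleMap 0 r θ ∈ closedBall (0:ℂ) r :=
    fun θ => sphere_subset_closedBall (hcm θ)
  have hfc : Continuous fun θ : ℝ => f (circleMap 0 r θ) := by
    apply continuous_iff_continuousAt.2
    intro θ
    exact ((hfa _ (hcb θ)).continuousAt).comp (continuous_circleMap 0 r).continuousAt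
  have hgc : Continuous fun θ : ℝ => circleMap 0 r θ * deriv f (circleMap 0 r θ) := by
    apply continuous_iff_continuousAt.2
    intro θ
    exact ((continuous_circleMap 0 r).continuousAt).mul
      (((hfa'.deriv _ (hcb θ)).continuousAt).comp (continuous_circleMap 0 r).continuousAt)
  have hfne : ∀ θ : ℝ, f (circleMap 0 r θ) ≠ 0 := by
    intro θ
    have h := hmf _ (hcm θ)
    intro h0; rw [h0] at h; simp at h; linarith
  obtain ⟨C, hC⟩ := (isCompact_sphere (0:ℂ) r).exists_bound_of_continuousOn
    (f := fun w : ℂ => w * deriv f w)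
    (fun w hw => ((continuousAt_id.mul
      ((hfa'.deriv _ (sphere_subset_closedBall hw)).continuousAt)).continuousWithinAt))
  have hC0 : 0 ≤ C := le_trans (norm_nonneg _) (hC _ (circleMap_mem_sphere _ hr.le 0))
  set F : ℕ → ℝ → ℂ := fun n θ => deriv (circleMap 0 r) θ •
    ((z ^ n * ((f (circleMap 0 r θ)) ^ (n+1))⁻¹) •
      (circleMap 0 r θ * deriv f (circleMap 0 r θ))) with hF_def
  have H : HasSum (fun n : ℕ => ∫ θ in (0:ℝ)..2 * Real.pi, F n θ)
      (∫ θ in (0:ℝ)..2 * Real.pi, deriv (circleMap 0 r) θ •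
        ((f (circleMap 0 r θ) - z)⁻¹ • (circleMap 0 r θ * deriv f (circleMap 0 r θ)))) := by
    apply intervalIntegral.hasSum_integral_of_dominated_convergence
      (bound := fun n _ => |r| * ((‖z‖ ^ n / m ^ (n+1)) * C))
    · intro n
      apply Continuous.aestronglyMeasurable
      simp only [hF_def, deriv_circleMap]
      exact ((continuous_circleMap 0 r).mul continuous_const).smul
        ((continuous_const.mul ((hfc.pow (n+1)).inv₀ fun θ => pow_ne_zero _ (hfne θ))).smul hgc)
    · intro n
      filter_upwards with θ _
      have h1 : ‖deriv (circleMap 0 r) θ‖ = |r| := by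
        simp [deriv_circleMap]
      rw [hF_def]
      simp only
      rw [norm_smul, h1, norm_smul, norm_mul, norm_pow]
      apply mul_le_mul_of_nonneg_left _ (abs_nonneg r)
      have h2 : ‖((f (circleMap 0 r θ)) ^ (n+1))⁻¹‖ ≤ (m ^ (n+1))⁻¹ := by
        rw [norm_inv, norm_pow]
        apply inv_anti₀ (pow_pos hm _)
        exact pow_le_pow_left₀ hm.le (hmf _ (hcm θ)) _
      calc ‖z‖ ^ n * ‖((f (circleMap 0 r θ)) ^ (n+1))⁻¹‖ *
            ‖circleMap 0 r θ * deriv f (circleMap 0 r θ)‖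
          ≤ ‖z‖ ^ n * (m ^ (n+1))⁻¹ * C := by
            apply mul_le_mul (mul_le_mul_of_nonneg_left h2 (by positivity)) (hC _ (hcm θ))
              (norm_nonneg _) (by positivity)
        _ = ‖z‖ ^ n / m ^ (n+1) * C := by rw [div_eq_mul_inv]
    · filter_upwards with θ _
      apply Summable.mul_left
      apply Summable.mul_right
      have he : ∀ n : ℕ, ‖z‖ ^ n / m ^ (n + 1) = m⁻¹ * (‖z‖ / m) ^ n := by
        intro n
        rw [div_pow, pow_succ, mul_comm (m ^ n) m, ← div_div, div_eq_inv_mul _ m, mul_div_assoc]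
      simp only [he]
      apply Summable.mul_left
      exact summable_geometric_of_lt_one (by positivity) (by rwa [div_lt_one hm])
    · exact _root_.intervalIntegrable_const (μ := MeasureTheory.volume)
    · filter_upwards with θ _
      set u := f (circleMap 0 r θ) with hu_def
      have hfθ : u ≠ 0 := hfne θ
      have hgeo : HasSum (fun n : ℕ => z ^ n * (u ^ (n+1))⁻¹) ((u - z)⁻¹) := by
        have hu : ‖z / u‖ < 1 := by
          rw [norm_div, div_lt_one (lt_of_lt_of_le hm (hmf _ (hcm θ)))]
          exact lt_of_lt_of_le hz (hmf _ (hcm θ))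
        have h := (hasSum_geometric_of_norm_lt_one hu).mul_right u⁻¹
        have he : (fun n : ℕ => (z / u) ^ n * u⁻¹) = fun n : ℕ => z ^ n * (u ^ (n+1))⁻¹ := by
          funext n
          rw [div_pow, pow_succ, mul_inv]
          field_simp
        have he2 : (1 - z / u)⁻¹ * u⁻¹ = (u - z)⁻¹ := by
          rw [← mul_inv]
          congr 1
          field_simp
        rw [he, he2] at h
        exact h
      exact (hgeo.smul_const _).const_smul _
  have key : ∀ n : ℕ, (∫ θ in (0:ℝ)..2 * Real.pi, F n θ) =
      z ^ n • ∫ θ in (0:ℝ)..2 * Real.pi, deriv (circleMap 0 r) θ •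
        (((f (circleMap 0 r θ)) ^ (n+1))⁻¹ • (circleMap 0 r θ * deriv f (circleMap 0 r θ))) := by
    intro n
    rw [← intervalIntegral.integral_smul]
    congr 1
    funext θ
    rw [hF_def]
    simp only
    rw [mul_smul]
    exact (smul_comm _ _ _).symm
  simp only [key] at H
  simp only [circleIntegral]
  exact H

lemma circleIntegral_add' {f g : ℂ → ℂ} {c : ℂ} {R : ℝ} (hf : CircleIntegrable f c R)
    (hg : CircleIntegrable g c R) :
    (∮ z in C(c, R), (f z + g z)) = (∮ z in C(c, R), f z) + ∮ z in C(c, R), g z := by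
  simp only [circleIntegral, smul_add, intervalIntegral.integral_add hf.out hg.out]

lemma lagC {f : ℂ → ℂ} {r : ℝ} (hr : 0 < r)
    (hfa : ∀ w ∈ closedBall (0:ℂ) r, AnalyticAt ℂ f w)
    (hfs : ∀ w ∈ sphere (0:ℂ) r, f w ≠ 0) (k : ℕ) :
    (∮ w in C(0, r), ((f w) ^ (k+2))⁻¹ • (w * deriv f w)) =
      ((k+1 : ℂ))⁻¹ • ∮ w in C(0, r), ((f w) ^ (k+1))⁻¹ := by
  have hfa' : AnalyticOnNhd ℂ f (closedBall (0:ℂ) r) := hfa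
  have hk1 : (k + 1 : ℂ) ≠ 0 := Nat.cast_add_one_ne_zero k
  set P : ℂ → ℂ := fun w => (-(k+1 : ℂ)⁻¹) * (w * (f w) ^ (-((k+1 : ℕ) : ℤ))) with hP_def
  set P' : ℂ → ℂ := fun w => (-(k+1 : ℂ)⁻¹) * ((f w) ^ (-((k+1 : ℕ) : ℤ)) +
      w * ((Int.cast (-((k+1 : ℕ) : ℤ)) : ℂ) * (f w) ^ (-((k+2 : ℕ) : ℤ)) * deriv f w)) with hP'_def
  have hexp : ((-((k+1 : ℕ) : ℤ)) - 1) = (-((k+2 : ℕ) : ℤ)) := by push_cast; ring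
  have hderivP : ∀ w ∈ sphere (0:ℂ) r, HasDerivWithinAt P (P' w) (sphere (0:ℂ) r) w := by
    intro w hw
    have hfw : f w ≠ 0 := hfs w hw
    have hfd : HasDerivAt f (deriv f w) w :=
      ((hfa w (sphere_subset_closedBall hw)).differentiableAt).hasDerivAt
    have hq : HasDerivAt (fun w => (f w) ^ (-((k+1 : ℕ) : ℤ)))
        (((Int.cast (-((k+1 : ℕ) : ℤ)) : ℂ)) * (f w) ^ ((-((k+1 : ℕ) : ℤ)) - 1) * deriv f w) w :=
      (hasDerivAt_zpow (-((k+1 : ℕ) : ℤ)) (f w) (Or.inl hfw)).comp w hfd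
    rw [hexp] at hq
    have hmul : HasDerivAt (fun w => w * (f w) ^ (-((k+1 : ℕ) : ℤ)))
        (1 * (f w) ^ (-((k+1 : ℕ) : ℤ)) +
          w * (((Int.cast (-((k+1 : ℕ) : ℤ)) : ℂ)) * (f w) ^ (-((k+2 : ℕ) : ℤ)) * deriv f w)) w :=
      (hasDerivAt_id w).mul hq
    have hP : HasDerivAt P (P' w) w := by
      have h2 := hmul.const_mul (-(k+1 : ℂ)⁻¹)
      rw [hP_def, hP'_def]
      simp only
      rw [one_mul] at h2
      exact h2
    exact hP.hasDerivWithinAt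
  have hint0 : (∮ w in C(0, r), P' w) = 0 :=
    circleIntegral.integral_eq_zero_of_hasDerivWithinAt hr.le hderivP
  have hcont1 : ContinuousOn (fun w => ((f w) ^ (k+1))⁻¹) (sphere (0:ℂ) r) := by
    intro w hw
    exact (((hfa w (sphere_subset_closedBall hw)).continuousAt.pow _).inv₀
      (pow_ne_zero _ (hfs w hw))).continuousWithinAt
  have hcont2 : ContinuousOn P' (sphere (0:ℂ) r) := by
    intro w hw
    have h1 := (hfa w (sphere_subset_closedBall hw)).continuousAt
    have h2 := (hfa'.deriv w (sphere_subset_closedBall hw)).continuousAt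
    have h3 : ContinuousAt (fun w => (f w) ^ (-((k+2 : ℕ) : ℤ))) w := by
      simp only [zpow_neg, zpow_natCast]
      exact (h1.pow _).inv₀ (pow_ne_zero _ (hfs w hw))
    have h4 : ContinuousAt (fun w => (f w) ^ (-((k+1 : ℕ) : ℤ))) w := by
      simp only [zpow_neg, zpow_natCast]
      exact (h1.pow _).inv₀ (pow_ne_zero _ (hfs w hw))
    exact (continuousAt_const.mul (h4.add
      (continuousAt_id.mul ((continuousAt_const.mul h3).mul h2)))).continuousWithinAt
  have hEq : Set.EqOn (fun w => ((f w) ^ (k+2))⁻¹ • (w * deriv f w))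
      (fun w => P' w + (k+1 : ℂ)⁻¹ • ((f w) ^ (k+1))⁻¹) (sphere (0:ℂ) r) := by
    intro w hw
    have hfw : f w ≠ 0 := hfs w hw
    simp only [hP'_def, smul_eq_mul, zpow_neg, zpow_natCast]
    push_cast
    generalize ((f w) ^ (k+1) : ℂ)⁻¹ = A
    generalize ((f w) ^ (k+2) : ℂ)⁻¹ = B
    field_simp
    ring
  have hsm := circleIntegral.integral_smul ((k+1 : ℂ)⁻¹) (fun w => ((f w) ^ (k+1))⁻¹) 0 r
  have hcongr := circleIntegral.integral_congr (c := (0:ℂ)) (R := r) hr.le hEq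
  have hadd := circleIntegral_add' (c := (0:ℂ)) (R := r)
    (hcont2.circleIntegrable hr.le)
    ((hcont1.const_smul ((k+1 : ℂ)⁻¹)).circleIntegrable hr.le)
  simp only [Pi.smul_apply] at hadd
  rw [hcongr, hadd, hint0, zero_add, hsm]

lemma lagD {ψ : ℂ → ℂ} {r : ℝ≥0} (hr : 0 < r)
    (hψ : DifferentiableOn ℂ ψ (closedBall (0:ℂ) r)) (k : ℕ) :
    (∮ w in C(0, (r:ℝ)), ((w : ℂ) ^ (k+1))⁻¹ • ψ w) =
      (2 * Real.pi * I) • (((k.factorial : ℂ))⁻¹ * iteratedDeriv k ψ 0) := by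
  have hball := hψ.hasFPowerSeriesOnBall hr
  have hcoeff := hball.factorial_smul (1 : ℂ) k
  rw [← iteratedDeriv_eq_iteratedFDeriv] at hcoeff
  have happ := cauchyPowerSeries_apply ψ 0 (r:ℝ) k 1
  have hkfac : (k.factorial : ℂ) ≠ 0 := Nat.cast_ne_zero.2 k.factorial_ne_zero
  have hint : (∮ w in C(0, (r:ℝ)), ((w : ℂ) ^ (k+1))⁻¹ • ψ w) =
      ∮ w in C(0, (r:ℝ)), ((1 : ℂ) / (w - 0)) ^ k • (w - 0)⁻¹ • ψ w := by
    congr 1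
    funext w
    rw [one_div, sub_zero, inv_pow, smul_smul, ← mul_inv, ← pow_succ]
  have h2 : (cauchyPowerSeries ψ 0 (r:ℝ) k fun _ => 1) =
      (k.factorial : ℂ)⁻¹ * iteratedDeriv k ψ 0 := by
    rw [← hcoeff, nsmul_eq_mul]
    field_simp
  have h3 : (∮ w in C(0, (r:ℝ)), ((1:ℂ) / (w - 0)) ^ k • (w - 0)⁻¹ • ψ w) =
      (2 * Real.pi * I) • (cauchyPowerSeries ψ 0 (r:ℝ) k fun _ => 1) := by
    rw [happ, smul_smul, mul_inv_cancel₀ two_pi_I_ne_zero, one_smul]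
  rw [hint, h3, h2]

/-- Lagrange inversion theorem: if `φ` is analytic at `0` with `φ 0 ≠ 0` and
`f w = w / φ w`, then `f` has an analytic local inverse `g` at `0`, whose values
are given by the convergent series `g z = ∑_{n ≥ 1} zⁿ/n! ⬝ (d/dw)^{n-1}|₀ (φ w)ⁿ`. -/
theorem stmt5 (φ : ℂ → ℂ) (hφ : AnalyticAt ℂ φ 0) (hφ0 : φ 0 ≠ 0)
    (f : ℂ → ℂ) (hf : ∀ w, f w = w / φ w) :
    ∃ g : ℂ → ℂ, AnalyticAt ℂ g 0 ∧ g 0 = 0 ∧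
      (∀ᶠ z in nhds (0 : ℂ), f (g z) = z) ∧
      (∀ᶠ z in nhds (0 : ℂ),
        HasSum (fun n : ℕ =>
          z ^ (n + 1) / (Nat.factorial (n + 1)) *
            iteratedDeriv n (fun w => (φ w) ^ (n + 1)) 0)
          (g z)) := by
  have hfe : f = fun w => w / φ w := funext hf
  subst hfe
  set f : ℂ → ℂ := fun w => w / φ w with hf_def
  -- basic facts at 0
  have hf0 : f 0 = 0 := by simp [hf_def]
  have hfa0 : AnalyticAt ℂ f 0 := analyticAt_id.div hφ hφ0
  have hder0 : HasDerivAt f ((1 * φ 0 - 0 * deriv φ 0) / (φ 0) ^ 2) 0 :=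
    (hasDerivAt_id 0).div (hφ.differentiableAt.hasDerivAt) hφ0
  have hd0 : deriv f 0 ≠ 0 := by
    rw [hder0.deriv]
    simp only [one_mul, zero_mul, sub_zero]
    exact div_ne_zero hφ0 (pow_ne_zero 2 hφ0)
  -- strict derivative and local inverse
  obtain ⟨p, hp⟩ := id hfa0
  have hstrict : HasStrictDerivAt f (deriv f 0) 0 := by
    have h1 := hp.hasStrictDerivAt
    rwa [← hp.deriv] at h1
  have hsf := hstrict.hasStrictFDerivAt_equiv hd0
  set i := (ContinuousLinearEquiv.unitsEquivAut ℂ) (Units.mk0 (deriv f 0) hd0) with hi_def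
  set F := hsf.toOpenPartialHomeomorph f with hF_def
  have hFcoe : (F : ℂ → ℂ) = f := hsf.toOpenPartialHomeomorph_coe
  have hFs : (0:ℂ) ∈ F.source := hsf.mem_toOpenPartialHomeomorph_source
  have hF0 : F 0 = 0 := by rw [hFcoe]; exact hf0
  set g : ℂ → ℂ := ⇑F.symm with hg_def
  have hg0 : g 0 = 0 := by
    rw [hg_def]
    nth_rewrite 1 [← hF0]
    exact F.left_inv hFs
  have hFt : (0:ℂ) ∈ F.target := hF0 ▸ F.map_source hFs
  -- power series of the inverse
  have hp1 : p 1 = (continuousMultilinearCurryFin1 ℂ ℂ ℂ).symm ↑i := by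
    have hE : (continuousMultilinearCurryFin1 ℂ ℂ ℂ) (p 1) = ↑i := by
      apply ContinuousLinearMap.ext_ring
      rw [continuousMultilinearCurryFin1_apply]
      have h2 : (Fin.snoc 0 (1:ℂ) : Fin 1 → ℂ) = fun _ => (1:ℂ) := by
        funext j
        fin_cases j
        simp [Fin.snoc]
      rw [h2, ← hp.deriv]
      show deriv f 0 = (ContinuousLinearMap.smulRight (1 : ℂ →L[ℂ] ℂ) (deriv f 0)) 1
      simp
    rw [← hE]
    exact ((continuousMultilinearCurryFin1 ℂ ℂ ℂ).symm_apply_apply _).symm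
  have hpF : HasFPowerSeriesAt (F : ℂ → ℂ) p 0 := by rw [hFcoe]; exact hp
  have hgsymm := F.hasFPowerSeriesAt_symm hFs hpF hp1
  rw [hF0] at hgsymm
  have hganal : AnalyticAt ℂ g 0 := ⟨_, hgsymm⟩
  -- choose a good radius r
  have hev : ∀ᶠ w in nhds (0:ℂ), AnalyticAt ℂ φ w ∧ φ w ≠ 0 ∧ deriv f w ≠ 0 := by
    have e1 := hφ.eventually_analyticAt
    have e2 := hφ.continuousAt.eventually_ne hφ0
    have e3 : ∀ᶠ w in nhds (0:ℂ), deriv f w ≠ 0 := by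
      obtain ⟨U, hU, hUo, hU0⟩ := _root_.eventually_nhds_iff.1 hfa0.eventually_analyticAt
      have hderU : AnalyticOnNhd ℂ (deriv f) U := AnalyticOnNhd.deriv (fun w hw => hU w hw)
      exact (hderU 0 hU0).continuousAt.eventually_ne hd0
    filter_upwards [e1, e2, e3] with w h1 h2 h3 using ⟨h1, h2, h3⟩
  have hUs : {w : ℂ | (AnalyticAt ℂ φ w ∧ φ w ≠ 0 ∧ deriv f w ≠ 0)} ∩ F.source ∈ nhds (0:ℂ) :=
    Filter.inter_mem hev (F.open_source.mem_nhds hFs)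
  obtain ⟨r, hr0, hrsub⟩ := Metric.nhds_basis_closedBall.mem_iff.1 hUs
  have hφa : ∀ w ∈ closedBall (0:ℂ) r, AnalyticAt ℂ φ w := fun w hw => (hrsub hw).1.1
  have hφn : ∀ w ∈ closedBall (0:ℂ) r, φ w ≠ 0 := fun w hw => (hrsub hw).1.2.1
  have hdern : ∀ w ∈ closedBall (0:ℂ) r, deriv f w ≠ 0 := fun w hw => (hrsub hw).1.2.2
  have hFsub : closedBall (0:ℂ) r ⊆ F.source := fun w hw => (hrsub hw).2
  have hfa : ∀ w ∈ closedBall (0:ℂ) r, AnalyticAt ℂ f w :=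
    fun w hw => analyticAt_id.div (hφa w hw) (hφn w hw)
  have hinj : Set.InjOn f (closedBall (0:ℂ) r) := by
    intro x hx y hy hxy
    have := F.injOn (hFsub hx) (hFsub hy)
    rw [hFcoe] at this
    exact this hxy
  have hfs : ∀ w ∈ sphere (0:ℂ) r, f w ≠ 0 := by
    intro w hw
    have hw0 : w ≠ 0 := by
      intro h
      rw [h] at hw
      simp [mem_sphere_iff_norm] at hw
      exact hr0.ne' hw.symm
    exact div_ne_zero hw0 (hφn w (sphere_subset_closedBall hw))
  -- minimum modulus on the circle
  obtain ⟨w₀, hw₀s, hw₀min'⟩ := (isCompact_sphere (0:ℂ) r).exists_isMinOn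
    (NormedSpace.sphere_nonempty.2 hr0.le)
    (continuousOn_of_forall_continuousAt
      (fun w hw => ((hfa w (sphere_subset_closedBall hw)).continuousAt).norm))
  have hw₀min : ∀ w ∈ sphere (0:ℂ) r, ‖f w₀‖ ≤ ‖f w‖ := fun w hw => hw₀min' hw
  set m := ‖f w₀‖ with hm_def
  have hm0 : 0 < m := norm_pos_iff.2 (hfs w₀ hw₀s)
  have hmf : ∀ w ∈ sphere (0:ℂ) r, m ≤ ‖f w‖ := hw₀min
  -- the coefficients
  have hcoeff : ∀ k : ℕ, (∮ w in C(0, r), ((f w) ^ (k+2))⁻¹ • (w * deriv f w)) =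
      (2 * Real.pi * I) • ((k+1 : ℂ)⁻¹ * ((k.factorial : ℂ))⁻¹ *
        iteratedDeriv k (fun w => (φ w) ^ (k+1)) 0) := by
    intro k
    rw [lagC hr0 hfa hfs k]
    have heq : Set.EqOn (fun w : ℂ => ((f w) ^ (k+1))⁻¹)
        (fun w : ℂ => ((w : ℂ) ^ (k+1))⁻¹ • ((φ w) ^ (k+1))) (sphere (0:ℂ) r) := by
      intro w hw
      have hw0 : w ≠ 0 := by
        intro h
        rw [h] at hw
        simp [mem_sphere_iff_norm] at hw
        exact hr0.ne' hw.symm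
      have hφw : φ w ≠ 0 := hφn w (sphere_subset_closedBall hw)
      simp only [hf_def, smul_eq_mul, div_pow]
      rw [inv_div]
      field_simp
    rw [circleIntegral.integral_congr hr0.le heq]
    have hrnn : ((r.toNNReal : ℝ)) = r := Real.coe_toNNReal r hr0.le
    have hψd : DifferentiableOn ℂ (fun w => (φ w) ^ (k+1)) (closedBall (0:ℂ) (r.toNNReal : ℝ)) := by
      rw [hrnn]
      intro w hw
      exact (((hφa w hw).pow (k+1)).differentiableAt).differentiableWithinAt
    have hD := lagD (ψ := fun w => (φ w) ^ (k+1)) (r := r.toNNReal)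
      (by simp [Real.toNNReal_pos.2 hr0]) hψd k
    rw [hrnn] at hD
    rw [hD]
    simp only [smul_eq_mul]
    ring
  -- now the eventual HasSum statement
  refine ⟨g, hganal, hg0, ?_, ?_⟩
  · filter_upwards [F.open_target.mem_nhds hFt] with z hz
    have := F.right_inv hz
    rw [hFcoe] at this
    exact this
  · have hball : Metric.ball (0:ℂ) m ∈ nhds (0:ℂ) := Metric.ball_mem_nhds _ hm0
    have hgc : ContinuousAt g 0 := by
      have := F.continuousAt_symm hFt
      rwa [hg_def]
    have hgev : ∀ᶠ z in nhds (0:ℂ), g z ∈ ball (0:ℂ) r := by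
      have : Metric.ball (0:ℂ) r ∈ nhds (g 0) := by
        rw [hg0]; exact Metric.ball_mem_nhds _ hr0
      exact hgc.preimage_mem_nhds this
    filter_upwards [hball, F.open_target.mem_nhds hFt, hgev] with z hz1 hz2 hz3
    have hz1' : ‖z‖ < m := by simpa [mem_ball, dist_zero_right] using hz1
    have hfgz : f (g z) = z := by
      have := F.right_inv hz2
      rw [hFcoe] at this
      exact this
    -- Cauchy representation
    have hA := lagA hr0 hfa hinj hdern hz3 hfgz
    have hB := lagB hr0 hfa hm0 hmf hz1'
    rw [hA] at hB
    -- divide by 2πi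
    have hBdiv := hB.const_smul ((2 * Real.pi * I : ℂ)⁻¹)
    have h2pi : (2 * Real.pi * I : ℂ)⁻¹ • ((2 * Real.pi * I : ℂ) • g z) = g z := by
      rw [smul_smul, inv_mul_cancel₀ two_pi_I_ne_zero, one_smul]
    rw [h2pi] at hBdiv
    set u : ℕ → ℂ := fun n => (2 * Real.pi * I : ℂ)⁻¹ •
      (z ^ n • ∮ w in C(0, r), ((f w) ^ (n+1))⁻¹ • (w * deriv f w)) with hu_def
    have hu0 : u 0 = 0 := by
      have hA0 := lagA hr0 hfa hinj hdern (mem_ball_self hr0) hf0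
      have heq0 : (fun w : ℂ => ((f w) ^ (0+1))⁻¹ • (w * deriv f w)) =
          fun w : ℂ => (f w - 0)⁻¹ • (w * deriv f w) := by
        funext w
        rw [pow_one, sub_zero]
      rw [hu_def]
      simp only
      rw [heq0, hA0]
      simp
    have hshift : HasSum (fun n => u (n + 1)) (g z) := by
      refine (hasSum_nat_add_iff (f := u) 1).2 ?_
      simpa [Finset.sum_range_one, hu0] using hBdiv
    -- identify the terms
    have hterm : ∀ n : ℕ, u (n + 1) = z ^ (n + 1) / (Nat.factorial (n + 1)) *
        iteratedDeriv n (fun w => (φ w) ^ (n + 1)) 0 := by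
      intro n
      rw [hu_def]
      simp only
      rw [hcoeff n]
      simp only [smul_eq_mul]
      generalize iteratedDeriv n (fun w => φ w ^ (n+1)) 0 = D
      rw [Nat.factorial_succ]
      push_cast
      have hn1 : ((n : ℂ) + 1) ≠ 0 := Nat.cast_add_one_ne_zero n
      have hnf : ((n.factorial : ℂ)) ≠ 0 := Nat.cast_ne_zero.2 n.factorial_ne_zero
      field_simp [I_ne_zero, Real.pi_ne_zero]
    exact HasSum.congr_fun hshift (fun x => (hterm x).symm)
end

section
/- Let φ be analytic at 0 with φ(0) ≠ 0, f(w) = w/φ(w), and g the analytic local inverse of f at 0. Let H be analytic at 0 with H(0) = 0. Then H(g(z)) = Σ_{n≥1} (z^n/n!) · (d^{n-1}/dw^{n-1})|_{w=0} (H'(w)·(φ(w))^n) for z in a neighbourhood of 0. -/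
open Filter Topology

namespace BurmannAux

lemma evDiff {F : ℂ → ℂ} (hF : AnalyticAt ℂ F 0) :
    ∀ᶠ w in 𝓝 (0:ℂ), DifferentiableAt ℂ F w :=
  hF.eventually_analyticAt.mono fun _ hw => hw.differentiableAt

lemma derivAnalytic {F : ℂ → ℂ} (hF : AnalyticAt ℂ F 0) : AnalyticAt ℂ (deriv F) 0 := by
  obtain ⟨s, hs, h⟩ := hF.eventually_analyticAt.exists_mem
  exact (AnalyticOnNhd.deriv fun y hy => h y hy) 0 (mem_of_mem_nhds hs)

lemma iteratedDeriv_add₀ {F G : ℂ → ℂ} (hF : AnalyticAt ℂ F 0) (hG : AnalyticAt ℂ G 0) (n : ℕ) :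
    iteratedDeriv n (fun w => F w + G w) 0 = iteratedDeriv n F 0 + iteratedDeriv n G 0 := by
  induction n generalizing F G with
  | zero => simp
  | succ n ih =>
    rw [iteratedDeriv_succ', iteratedDeriv_succ', iteratedDeriv_succ']
    have hev : deriv (fun w => F w + G w) =ᶠ[𝓝 (0:ℂ)] fun w => deriv F w + deriv G w := by
      filter_upwards [evDiff hF, evDiff hG] with w h1 h2
      exact deriv_add h1 h2
    rw [hev.iteratedDeriv_eq n]
    exact ih (derivAnalytic hF) (derivAnalytic hG)

lemma iteratedDeriv_cmul₀ {F : ℂ → ℂ} (hF : AnalyticAt ℂ F 0) (c : ℂ) (n : ℕ) :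
    iteratedDeriv n (fun w => c * F w) 0 = c * iteratedDeriv n F 0 := by
  induction n generalizing F with
  | zero => simp
  | succ n ih =>
    rw [iteratedDeriv_succ', iteratedDeriv_succ']
    have hev : deriv (fun w => c * F w) =ᶠ[𝓝 (0:ℂ)] fun w => c * deriv F w := by
      filter_upwards [evDiff hF] with w h1
      exact deriv_const_mul c h1
    rw [hev.iteratedDeriv_eq n]
    exact ih (derivAnalytic hF)

lemma analyticAt_id' : AnalyticAt ℂ (fun w : ℂ => w) 0 := analyticAt_id

lemma iteratedDeriv_id_mul {G : ℂ → ℂ} (hG : AnalyticAt ℂ G 0) (n : ℕ) :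
    iteratedDeriv (n+1) (fun w => w * G w) 0 = (n+1) * iteratedDeriv n G 0 := by
  induction n generalizing G with
  | zero =>
    rw [iteratedDeriv_one]
    have h : HasDerivAt (fun w : ℂ => w * G w) (1 * G 0 + 0 * deriv G 0) 0 :=
      (hasDerivAt_id (0:ℂ)).mul hG.differentiableAt.hasDerivAt
    simp only [iteratedDeriv_zero]
    rw [h.deriv]
    simp
  | succ n ih =>
    rw [iteratedDeriv_succ' (n := n+1)]
    have hev : deriv (fun w => w * G w) =ᶠ[𝓝 (0:ℂ)] fun w => G w + w * deriv G w := by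
      filter_upwards [evDiff hG] with w h1
      have h : HasDerivAt (fun w : ℂ => w * G w) (1 * G w + w * deriv G w) w :=
        (hasDerivAt_id w).mul h1.hasDerivAt
      rw [h.deriv]; ring
    rw [hev.iteratedDeriv_eq (n+1)]
    have ha2 : AnalyticAt ℂ (fun w : ℂ => w * deriv G w) 0 :=
      analyticAt_id'.mul (derivAnalytic hG)
    rw [iteratedDeriv_add₀ hG ha2 (n+1)]
    rw [ih (derivAnalytic hG), ← iteratedDeriv_succ']
    push_cast
    ring

lemma iteratedDeriv_pow_mul_zero (n : ℕ) : ∀ {j : ℕ} {G : ℂ → ℂ}, AnalyticAt ℂ G 0 → n < j →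
    iteratedDeriv n (fun w => w ^ j * G w) 0 = 0 := by
  induction n with
  | zero =>
    intro j G hG hj
    simp [iteratedDeriv_zero, zero_pow (by omega : j ≠ 0)]
  | succ n ih =>
    intro j G hG hj
    obtain ⟨m, rfl⟩ : ∃ m, j = m + 1 := ⟨j - 1, by omega⟩
    rw [iteratedDeriv_succ']
    have hev : deriv (fun w => w ^ (m+1) * G w) =ᶠ[𝓝 (0:ℂ)]
        fun w => ((m:ℂ)+1) * (w ^ m * G w) + w ^ (m+1) * deriv G w := by
      filter_upwards [evDiff hG] with w h1
      have h := (hasDerivAt_pow (m+1) w).fun_mul h1.hasDerivAt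
      rw [h.deriv]; push_cast; ring
    rw [hev.iteratedDeriv_eq n]
    have a1 : AnalyticAt ℂ (fun w : ℂ => w ^ m * G w) 0 := (analyticAt_id'.pow m).mul hG
    have a2 : AnalyticAt ℂ (fun w : ℂ => ((m:ℂ)+1) * (w ^ m * G w)) 0 := analyticAt_const.mul a1
    have a3 : AnalyticAt ℂ (fun w : ℂ => w ^ (m+1) * deriv G w) 0 :=
      (analyticAt_id'.pow (m+1)).mul (derivAnalytic hG)
    rw [iteratedDeriv_add₀ a2 a3 n]
    rw [iteratedDeriv_cmul₀ a1 _ n, ih hG (by omega), ih (derivAnalytic hG) (by omega),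
      mul_zero, add_zero]

/-- Taylor coefficient at 0. -/
noncomputable def Tc (n : ℕ) (F : ℂ → ℂ) : ℂ := iteratedDeriv n F 0 / n.factorial

lemma Tc_zero (F : ℂ → ℂ) : Tc 0 F = F 0 := by simp [Tc]

lemma Tc_congr {F G : ℂ → ℂ} (h : F =ᶠ[𝓝 (0:ℂ)] G) (n : ℕ) : Tc n F = Tc n G := by
  rw [Tc, Tc, h.iteratedDeriv_eq n]

lemma Tc_add {F G : ℂ → ℂ} (hF : AnalyticAt ℂ F 0) (hG : AnalyticAt ℂ G 0) (n : ℕ) :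
    Tc n (fun w => F w + G w) = Tc n F + Tc n G := by
  rw [Tc, Tc, Tc, iteratedDeriv_add₀ hF hG, add_div]

lemma Tc_cmul {F : ℂ → ℂ} (hF : AnalyticAt ℂ F 0) (c : ℂ) (n : ℕ) :
    Tc n (fun w => c * F w) = c * Tc n F := by
  rw [Tc, Tc, iteratedDeriv_cmul₀ hF, mul_div_assoc]

lemma Tc_sub {F G : ℂ → ℂ} (hF : AnalyticAt ℂ F 0) (hG : AnalyticAt ℂ G 0) (n : ℕ) :
    Tc n (fun w => F w - G w) = Tc n F - Tc n G := by
  have h1 : (fun w => F w - G w) = fun w => F w + (-1 : ℂ) * G w := by funext w; ring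
  rw [h1, Tc_add (G := fun w => (-1 : ℂ) * G w) hF (analyticAt_const.mul hG), Tc_cmul hG]; ring

lemma Tc_id_mul {G : ℂ → ℂ} (hG : AnalyticAt ℂ G 0) (n : ℕ) :
    Tc (n+1) (fun w => w * G w) = Tc n G := by
  rw [Tc, Tc, iteratedDeriv_id_mul hG]
  have h1 : ((n:ℂ)+1) ≠ 0 := Nat.cast_add_one_ne_zero n
  have h2 : ((n.factorial : ℂ)) ≠ 0 := Nat.cast_ne_zero.mpr n.factorial_ne_zero
  rw [Nat.factorial_succ]
  push_cast
  field_simp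

lemma Tc_pow_mul (j : ℕ) : ∀ {n : ℕ} {G : ℂ → ℂ}, AnalyticAt ℂ G 0 →
    Tc (n + j) (fun w => w ^ j * G w) = Tc n G := by
  induction j with
  | zero =>
    intro n G hG
    simp only [pow_zero, one_mul, Nat.add_zero]
  | succ j ih =>
    intro n G hG
    have h1 : (fun w : ℂ => w ^ (j+1) * G w) = fun w => w * (w ^ j * G w) := by
      funext w; ring
    have a1 : AnalyticAt ℂ (fun w : ℂ => w ^ j * G w) 0 := (analyticAt_id'.pow j).mul hG
    rw [h1, show n + (j+1) = (n+j)+1 from rfl, Tc_id_mul a1, ih hG]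

lemma Tc_pow_mul_zero {j n : ℕ} {G : ℂ → ℂ} (hG : AnalyticAt ℂ G 0) (h : n < j) :
    Tc n (fun w => w ^ j * G w) = 0 := by
  rw [Tc, iteratedDeriv_pow_mul_zero n hG h, zero_div]

lemma Tc_deriv (F : ℂ → ℂ) (n : ℕ) : Tc n (deriv F) = ((n:ℂ)+1) * Tc (n+1) F := by
  have h1 : ((n:ℂ)+1) ≠ 0 := Nat.cast_add_one_ne_zero n
  have h2 : ((n.factorial : ℂ)) ≠ 0 := Nat.cast_ne_zero.mpr n.factorial_ne_zero
  rw [Tc, Tc, ← iteratedDeriv_succ', Nat.factorial_succ]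
  push_cast
  field_simp

lemma iteratedDeriv_const₀ : ∀ (n : ℕ) (c : ℂ), iteratedDeriv (n+1) (fun _ : ℂ => c) 0 = 0 := by
  intro n
  induction n with
  | zero => intro c; rw [iteratedDeriv_one]; simp
  | succ n ih =>
    intro c
    rw [iteratedDeriv_succ']
    have : deriv (fun _ : ℂ => c) = fun _ : ℂ => (0:ℂ) := by
      funext w; exact deriv_const w c
    rw [this]
    exact ih 0

lemma Tc_const_zero {n : ℕ} (hn : n ≠ 0) (c : ℂ) : Tc n (fun _ => c) = 0 := by
  obtain ⟨m, rfl⟩ : ∃ m, n = m + 1 := ⟨n - 1, by omega⟩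
  rw [Tc, iteratedDeriv_const₀, zero_div]


lemma dslope_analytic {R : ℂ → ℂ} (hR : AnalyticAt ℂ R 0) : AnalyticAt ℂ (dslope R 0) 0 := by
  obtain ⟨p, hp⟩ := hR
  exact ⟨_, hp.has_fpower_series_dslope_fslope⟩

lemma base_decomp {R : ℂ → ℂ} (w : ℂ) : R w = R 0 + w * dslope R 0 w := by
  have := sub_smul_dslope R 0 w
  simp only [sub_zero, smul_eq_mul] at this
  rw [this]; ring

lemma truncation {h : ℂ → ℂ} (hh : AnalyticAt ℂ h 0) (N : ℕ) :
    ∃ R : ℂ → ℂ, AnalyticAt ℂ R 0 ∧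
      ∀ᶠ z in 𝓝 (0:ℂ), h z = (∑ k ∈ Finset.range N, Tc k h * z ^ k) + z ^ N * R z := by
  induction N with
  | zero =>
    exact ⟨h, hh, Filter.Eventually.of_forall fun z => by simp⟩
  | succ N ih =>
    obtain ⟨R, hR, hev⟩ := ih
    refine ⟨dslope R 0, dslope_analytic hR, ?_⟩
    have hc : R 0 = Tc N h := by
      have e1 : Tc N h
          = Tc N (fun z => (∑ k ∈ Finset.range N, Tc k h * z ^ k) + z ^ N * R z) :=
        Tc_congr hev N
      have aSum : AnalyticAt ℂ (fun z : ℂ => ∑ k ∈ Finset.range N, Tc k h * z ^ k) 0 := by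
        apply Finset.analyticAt_fun_sum
        intro k _
        exact analyticAt_const.mul (analyticAt_id'.pow k)
      have aRem : AnalyticAt ℂ (fun z : ℂ => z ^ N * R z) 0 := (analyticAt_id'.pow N).mul hR
      rw [Tc_add aSum aRem N] at e1
      have eSum : Tc N (fun z : ℂ => ∑ k ∈ Finset.range N, Tc k h * z ^ k) = 0 := by
        have : ∀ (M : ℕ), M ≤ N → Tc N (fun z : ℂ => ∑ k ∈ Finset.range M, Tc k h * z ^ k) = 0 := by
          intro M
          induction M with
          | zero =>
            intro _
            have : (fun z : ℂ => ∑ k ∈ Finset.range 0, Tc k h * z ^ k) = fun _ => (0:ℂ) := by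
              funext z; simp
            rw [this]
            rcases Nat.eq_zero_or_pos N with hN | hN
            · subst hN; simp [Tc_zero]
            · exact Tc_const_zero (by omega) 0
          | succ M ihM =>
            intro hMN
            have hsplit : (fun z : ℂ => ∑ k ∈ Finset.range (M+1), Tc k h * z ^ k)
                = fun z => (∑ k ∈ Finset.range M, Tc k h * z ^ k) + Tc M h * z ^ M := by
              funext z; rw [Finset.sum_range_succ]
            have aSumM : AnalyticAt ℂ (fun z : ℂ => ∑ k ∈ Finset.range M, Tc k h * z ^ k) 0 := by
              apply Finset.analyticAt_fun_sum
              intro k _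
              exact analyticAt_const.mul (analyticAt_id'.pow k)
            have aMono : AnalyticAt ℂ (fun z : ℂ => Tc M h * z ^ M) 0 :=
              analyticAt_const.mul (analyticAt_id'.pow M)
            rw [hsplit, Tc_add aSumM aMono N, ihM (by omega)]
            have hm : (fun z : ℂ => Tc M h * z ^ M) = fun z => z ^ M * ((fun _ : ℂ => Tc M h) z) := by
              funext z; ring
            rw [hm, show N = (N - M) + M by omega, Tc_pow_mul M analyticAt_const,
              Tc_const_zero (by omega), zero_add]
        exact this N le_rfl
      have eRem : Tc N (fun z : ℂ => z ^ N * R z) = 0 + R 0 := by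
        have := Tc_pow_mul (j := N) (n := 0) hR
        rw [zero_add] at this
        rw [this, Tc_zero, zero_add]
      rw [eSum, eRem, zero_add, zero_add] at e1
      exact e1.symm
    filter_upwards [hev] with z e1
    rw [e1, Finset.sum_range_succ, ← hc]
    rw [base_decomp (R := R) z]
    ring


lemma analytic_sub' {F G : ℂ → ℂ} (hF : AnalyticAt ℂ F 0) (hG : AnalyticAt ℂ G 0) :
    AnalyticAt ℂ (fun w => F w - G w) 0 := hF.sub hG

lemma Tc_zero_fun (n : ℕ) : Tc n (fun _ : ℂ => (0:ℂ)) = 0 := by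
  cases n with
  | zero => simp [Tc_zero]
  | succ m => exact Tc_const_zero (by omega) 0

lemma Tc_sum {N n : ℕ} {F : ℕ → ℂ → ℂ} (hF : ∀ k, AnalyticAt ℂ (F k) 0) :
    Tc n (fun w => ∑ k ∈ Finset.range N, F k w) = ∑ k ∈ Finset.range N, Tc n (F k) := by
  induction N with
  | zero => simpa using Tc_zero_fun n
  | succ N ih =>
    have hs : (fun w : ℂ => ∑ k ∈ Finset.range (N+1), F k w)
        = fun w => (∑ k ∈ Finset.range N, F k w) + F N w := by
      funext w; rw [Finset.sum_range_succ]
    have aS : AnalyticAt ℂ (fun w : ℂ => ∑ k ∈ Finset.range N, F k w) 0 :=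
      Finset.analyticAt_fun_sum _ fun k _ => hF k
    rw [hs, Tc_add aS (hF N), ih, Finset.sum_range_succ]

lemma keyM {φ ψ : ℂ → ℂ} (hφ : AnalyticAt ℂ φ 0) (hφ0 : φ 0 ≠ 0)
    (hψdef : ψ = fun w => (φ w)⁻¹) (k : ℕ) :
    Tc (k+1) (fun w => φ w ^ (k+1)) = Tc k (fun w => ψ w * deriv φ w * φ w ^ (k+1)) := by
  have hφne := hφ.continuousAt.eventually_ne hφ0
  have hev : (fun w => ψ w * deriv φ w * φ w ^ (k+1)) =ᶠ[𝓝 (0:ℂ)]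
      fun w => ((k:ℂ)+1)⁻¹ * deriv (fun w => φ w ^ (k+1)) w := by
    filter_upwards [evDiff hφ, hφne] with w h1 h2
    have hd : deriv (fun w => φ w ^ (k+1)) w = (↑(k+1) : ℂ) * φ w ^ (k+1-1) * deriv φ w :=
      (h1.hasDerivAt.pow (k+1)).deriv
    rw [hd, hψdef]
    have hk : ((k:ℂ)+1) ≠ 0 := Nat.cast_add_one_ne_zero k
    simp only [Nat.add_sub_cancel]
    push_cast
    field_simp
    ring
  rw [Tc_congr hev k, Tc_cmul (F := deriv (fun w => φ w ^ (k+1))) (derivAnalytic (hφ.pow (k+1))) _ k, Tc_deriv]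
  rw [← mul_assoc, inv_mul_cancel₀ (Nat.cast_add_one_ne_zero k), one_mul]

lemma core {φ ψ H h : ℂ → ℂ}
    (hφ : AnalyticAt ℂ φ 0) (hφ0 : φ 0 ≠ 0)
    (hψdef : ψ = fun w => (φ w)⁻¹)
    (hh : AnalyticAt ℂ h 0) (hh0 : h 0 = 0)
    (hHeq : ∀ᶠ w in 𝓝 (0:ℂ), H w = h (w * ψ w))
    (n : ℕ) :
    iteratedDeriv n (fun w => deriv H w * φ w ^ (n + 1)) 0 = iteratedDeriv (n+1) h 0 := by
  have hψ : AnalyticAt ℂ ψ 0 := by rw [hψdef]; exact hφ.inv hφ0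
  have hφne : ∀ᶠ w in 𝓝 (0:ℂ), φ w ≠ 0 := hφ.continuousAt.eventually_ne hφ0
  obtain ⟨R, hR, hexp⟩ := truncation hh (n+2)
  have hu_an : AnalyticAt ℂ (fun w : ℂ => w * ψ w) 0 := analyticAt_id'.mul hψ
  have hu0 : (0:ℂ) * ψ 0 = 0 := zero_mul _
  have hu_t : Filter.Tendsto (fun w : ℂ => w * ψ w) (𝓝 0) (𝓝 0) := by
    have := hu_an.continuousAt.tendsto
    rwa [hu0] at this
  set S : ℂ → ℂ := fun w => ψ w ^ (n+2) * R (w * ψ w) with hSdef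
  have hS : AnalyticAt ℂ S 0 := by
    apply (hψ.pow (n+2)).mul
    exact AnalyticAt.comp (by simpa using hR) hu_an
  have hc0 : Tc 0 h = 0 := by simpa [Tc_zero] using hh0
  set P : ℂ → ℂ := fun w =>
    (∑ j ∈ Finset.range (n+1), Tc (j+1) h * (w * ψ w) ^ (j+1)) + w ^ (n+2) * S w with hPdef
  have hHP : H =ᶠ[𝓝 (0:ℂ)] P := by
    filter_upwards [hHeq, hu_t.eventually hexp] with w e1 e2
    rw [e1, e2, Finset.sum_range_succ']
    simp only [hPdef, hSdef, pow_zero, mul_one, hc0, zero_mul, add_zero, mul_pow]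
    ring
  set Q : ℂ → ℂ := fun w =>
    (∑ j ∈ Finset.range (n+1),
      Tc (j+1) h * (((j:ℂ)+1) * (w * ψ w) ^ j * (1 * ψ w + w * deriv ψ w))) +
      (((n:ℂ)+2) * w ^ (n+1) * S w + w ^ (n+2) * deriv S w) with hQdef
  have hPQ : deriv P =ᶠ[𝓝 (0:ℂ)] Q := by
    filter_upwards [evDiff hψ, evDiff hS] with w hdψ hdS
    have hu : HasDerivAt (fun w : ℂ => w * ψ w) (1 * ψ w + w * deriv ψ w) w :=
      (hasDerivAt_id w).mul hdψ.hasDerivAt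
    have hsum : HasDerivAt
        (fun w : ℂ => ∑ j ∈ Finset.range (n+1), Tc (j+1) h * (w * ψ w) ^ (j+1))
        (∑ j ∈ Finset.range (n+1),
          Tc (j+1) h * (((j:ℂ)+1) * (w * ψ w) ^ j * (1 * ψ w + w * deriv ψ w))) w := by
      apply HasDerivAt.fun_sum
      intro j _
      have h1 := (hu.fun_pow (j+1)).const_mul (Tc (j+1) h)
      simpa only [Nat.add_sub_cancel, Nat.cast_add, Nat.cast_one] using h1
    have hrem : HasDerivAt (fun w : ℂ => w ^ (n+2) * S w)
        (((n:ℂ)+2) * w ^ (n+1) * S w + w ^ (n+2) * deriv S w) w := by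
      have h2 := (hasDerivAt_pow (n+2) w).fun_mul hdS.hasDerivAt
      simpa only [Nat.add_sub_cancel, Nat.cast_add, Nat.cast_ofNat, (by omega : n + 2 - 1 = n + 1)] using h2
    exact (hsum.add hrem).deriv
  have hψ'ev : ∀ᶠ w in 𝓝 (0:ℂ), deriv ψ w = -(deriv φ w * ψ w ^ 2) := by
    filter_upwards [evDiff hφ, hφne] with w h1 h2
    rw [hψdef, deriv_fun_inv'' h1 h2, div_eq_mul_inv, ← inv_pow]
    ring
  set V : ℕ → ℂ → ℂ := fun m w => ψ w * deriv φ w * φ w ^ m with hVdef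
  set U : ℂ → ℂ := fun w => (((n:ℂ)+2) * S w + w * deriv S w) * φ w ^ (n+1) with hUdef
  set G : ℂ → ℂ := fun w =>
    (∑ j ∈ Finset.range (n+1),
      ((j:ℂ)+1) * Tc (j+1) h * (w ^ j * φ w ^ (n-j) - w ^ (j+1) * V (n-j) w)) +
      w ^ (n+1) * U w with hGdef
  have hLG : (fun w => deriv H w * φ w ^ (n+1)) =ᶠ[𝓝 (0:ℂ)] G := by
    filter_upwards [hHP.deriv, hPQ, hφne, hψ'ev] with w e1 e2 hw e3
    rw [e1, e2]
    simp only [hQdef, hGdef, hUdef, hVdef]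
    rw [add_mul, Finset.sum_mul]
    congr 1
    · apply Finset.sum_congr rfl
      intro j hj
      have hj' : j ≤ n := by
        have := Finset.mem_range.mp hj; omega
      have hsplit : φ w ^ (n+1) = φ w ^ (j+1) * φ w ^ (n-j) := by
        rw [← pow_add]; congr 1; omega
      have h4 : ψ w * φ w = 1 := by rw [hψdef]; exact inv_mul_cancel₀ hw
      have h7 : ψ w ^ (j+1) * φ w ^ (j+1) = 1 := by rw [← mul_pow, h4, one_pow]
      rw [e3, mul_pow w (ψ w) j, hsplit]
      push_cast
      linear_combination (((j:ℂ)+1) * Tc (j+1) h * φ w ^ (n-j) *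
        (w ^ j - w ^ (j+1) * deriv φ w * ψ w)) * h7
    · push_cast; ring
  -- now the Taylor coefficient computation
  have aV : ∀ m : ℕ, AnalyticAt ℂ (V m) 0 := fun m => (hψ.mul (derivAnalytic hφ)).mul (hφ.pow m)
  have aU : AnalyticAt ℂ U 0 :=
    ((analyticAt_const.mul hS).add (analyticAt_id'.mul (derivAnalytic hS))).mul (hφ.pow (n+1))
  have aterm : ∀ j : ℕ, AnalyticAt ℂ
      (fun w : ℂ => ((j:ℂ)+1) * Tc (j+1) h * (w ^ j * φ w ^ (n-j) - w ^ (j+1) * V (n-j) w)) 0 :=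
    fun j => analyticAt_const.mul (analytic_sub' ((analyticAt_id'.pow j).mul (hφ.pow _))
      ((analyticAt_id'.pow (j+1)).mul (aV _)))
  have main : Tc n (fun w => deriv H w * φ w ^ (n+1)) = ((n:ℂ)+1) * Tc (n+1) h := by
    rw [Tc_congr hLG n]
    simp only [hGdef]
    have aSum : AnalyticAt ℂ (fun w : ℂ => ∑ j ∈ Finset.range (n+1),
        ((j:ℂ)+1) * Tc (j+1) h * (w ^ j * φ w ^ (n-j) - w ^ (j+1) * V (n-j) w)) 0 :=
      Finset.analyticAt_fun_sum _ fun j _ => aterm j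
    rw [Tc_add (G := fun w => w ^ (n+1) * U w) aSum ((analyticAt_id'.pow (n+1)).mul aU) n]
    rw [Tc_pow_mul_zero aU (by omega), add_zero]
    rw [Tc_sum (fun j => aterm j)]
    have hterm_lt : ∀ j ∈ Finset.range n, Tc n
        (fun w : ℂ => ((j:ℂ)+1) * Tc (j+1) h * (w ^ j * φ w ^ (n-j) - w ^ (j+1) * V (n-j) w)) = 0 := by
      intro j hj
      have hjn : j < n := Finset.mem_range.mp hj
      have aX : AnalyticAt ℂ (fun w : ℂ => w ^ j * φ w ^ (n-j)) 0 :=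
        (analyticAt_id'.pow j).mul (hφ.pow _)
      have aY : AnalyticAt ℂ (fun w : ℂ => w ^ (j+1) * V (n-j) w) 0 :=
        (analyticAt_id'.pow (j+1)).mul (aV _)
      rw [Tc_cmul (analytic_sub' aX aY), Tc_sub aX aY]
      have eX := Tc_pow_mul j (n := n - j) (G := fun w => φ w ^ (n-j)) (hφ.pow _)
      rw [show n - j + j = n from by omega] at eX
      have eY := Tc_pow_mul (j+1) (n := n - j - 1) (G := V (n-j)) (aV _)
      rw [show n - j - 1 + (j+1) = n from by omega] at eY
      rw [eX, eY]
      obtain ⟨m, hm⟩ : ∃ m, n - j = m + 1 := ⟨n - j - 1, by omega⟩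
      rw [hm, Nat.add_sub_cancel]
      simp only [hVdef]
      rw [keyM hφ hφ0 hψdef m]
      ring
    rw [Finset.sum_range_succ, Finset.sum_eq_zero hterm_lt, zero_add]
    have aX : AnalyticAt ℂ (fun w : ℂ => w ^ n * φ w ^ (n-n)) 0 :=
      (analyticAt_id'.pow n).mul (hφ.pow _)
    have aY : AnalyticAt ℂ (fun w : ℂ => w ^ (n+1) * V (n-n) w) 0 :=
      (analyticAt_id'.pow (n+1)).mul (aV _)
    rw [Tc_cmul (analytic_sub' aX aY), Tc_sub aX aY]
    have eX : Tc n (fun w : ℂ => w ^ n * φ w ^ (n-n)) = 1 := by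
      have e := Tc_pow_mul n (n := 0) (G := fun w => φ w ^ (n-n)) (hφ.pow _)
      rw [show 0 + n = n from by omega] at e
      rw [e, Tc_zero]
      simp
    have eY : Tc n (fun w : ℂ => w ^ (n+1) * V (n-n) w) = 0 :=
      Tc_pow_mul_zero (aV _) (by omega)
    rw [eX, eY]
    push_cast
    ring
  have hfac : ((n.factorial : ℂ)) ≠ 0 := Nat.cast_ne_zero.mpr n.factorial_ne_zero
  have h2 : iteratedDeriv n (fun w => deriv H w * φ w ^ (n+1)) 0
      = (n.factorial : ℂ) * (((n:ℂ)+1) * Tc (n+1) h) := by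
    rw [← main, Tc, mul_div_cancel₀]
    exact hfac
  rw [h2]
  simp only [Tc, Nat.factorial_succ]
  push_cast
  rw [mul_div_assoc', mul_div_mul_left _ _ (Nat.cast_add_one_ne_zero n), mul_comm,
    div_mul_cancel₀ _ hfac]

end BurmannAux

open BurmannAux

/-- Bürmann formula: with `g` the analytic local inverse of `f w = w / φ w` at `0`
and `H` analytic at `0` with `H 0 = 0`, one has
`H (g z) = ∑_{n ≥ 1} zⁿ/n! ⬝ (d/dw)^{n-1}|₀ (H'(w) (φ w)ⁿ)` near `0`. -/
theorem stmt6 (φ : ℂ → ℂ) (hφ : AnalyticAt ℂ φ 0) (hφ0 : φ 0 ≠ 0)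
    (f : ℂ → ℂ) (hf : ∀ w, f w = w / φ w)
    (g : ℂ → ℂ) (hg : AnalyticAt ℂ g 0) (hg0 : g 0 = 0)
    (hfg : ∀ᶠ z in nhds (0 : ℂ), f (g z) = z)
    (H : ℂ → ℂ) (hH : AnalyticAt ℂ H 0) (hH0 : H 0 = 0) :
    ∀ᶠ z in nhds (0 : ℂ),
      HasSum (fun n : ℕ =>
        z ^ (n + 1) / (Nat.factorial (n + 1)) *
          iteratedDeriv n (fun w => deriv H w * (φ w) ^ (n + 1)) 0)
        (H (g z)) := by
  set ψ : ℂ → ℂ := fun w => (φ w)⁻¹ with hψdef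
  have hψ : AnalyticAt ℂ ψ 0 := hφ.inv hφ0
  have hψ00 : ψ 0 ≠ 0 := inv_ne_zero hφ0
  have hfeq : f = fun w => w * ψ w := by
    funext w; rw [hf, div_eq_mul_inv]
  have hf_an : AnalyticAt ℂ f 0 := by rw [hfeq]; exact analyticAt_id'.mul hψ
  have hf0 : f 0 = 0 := by rw [hf]; simp
  set h : ℂ → ℂ := fun z => H (g z) with hhdef
  have h_an : AnalyticAt ℂ h 0 := AnalyticAt.comp (by rwa [hg0]) hg
  have hh0 : h 0 = 0 := by rw [hhdef]; simp only [hg0, hH0]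
  -- local inverse: g (f w) = w near 0
  have hsψ : HasStrictDerivAt ψ (fderiv ℂ ψ 0 1) 0 := hψ.hasStrictFDerivAt.hasStrictDerivAt
  have hsf0 : HasStrictDerivAt (fun w : ℂ => w * ψ w) (1 * ψ 0 + 0 * fderiv ℂ ψ 0 1) 0 :=
    (hasStrictDerivAt_id 0).mul hsψ
  have hsf : HasStrictDerivAt f (ψ 0) 0 := by
    rw [hfeq]; simpa using hsf0
  have e := hsf.hasStrictFDerivAt_equiv hψ00
  have hgf : ∀ᶠ w in 𝓝 (0:ℂ), g (f w) = w := by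
    have hsrc : (e.toOpenPartialHomeomorph f).source ∈ 𝓝 (0:ℂ) :=
      (e.toOpenPartialHomeomorph f).open_source.mem_nhds e.mem_toOpenPartialHomeomorph_source
    have hfc : Filter.Tendsto f (𝓝 0) (𝓝 (0:ℂ)) := by
      have := hf_an.continuousAt.tendsto; rwa [hf0] at this
    have hgfc : Filter.Tendsto (fun w => g (f w)) (𝓝 (0:ℂ)) (𝓝 (0:ℂ)) := by
      have hgc := hg.continuousAt.tendsto; rw [hg0] at hgc
      exact hgc.comp hfc
    filter_upwards [hfc.eventually hfg, hgfc.eventually hsrc, hsrc] with w e1 e2 e3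
    exact (e.toOpenPartialHomeomorph f).injOn e2 (by simpa using e3)
      (by simpa using e1)
  have hHeq : ∀ᶠ w in 𝓝 (0:ℂ), H w = h (w * ψ w) := by
    filter_upwards [hgf] with w e1
    have hw : w * ψ w = f w := by rw [hf, div_eq_mul_inv]
    rw [hw, hhdef]
    simp only
    rw [e1]
  -- Taylor expansion of h on a small ball
  obtain ⟨s, hs_mem, hs_an⟩ := h_an.eventually_analyticAt.exists_mem
  obtain ⟨r, hr_pos, hr_sub⟩ := Metric.mem_nhds_iff.mp hs_mem
  have hdiff : DifferentiableOn ℂ h (Metric.ball 0 r) :=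
    fun z hz => ((hs_an z (hr_sub hz)).differentiableAt).differentiableWithinAt
  filter_upwards [Metric.ball_mem_nhds (0:ℂ) hr_pos] with z hz
  have hts := Complex.hasSum_taylorSeries_on_ball hdiff hz
  simp only [sub_zero, smul_eq_mul] at hts
  have hshift := (hasSum_nat_add_iff' 1).mpr hts
  simp only [Finset.range_one, Finset.sum_singleton, Nat.factorial_zero, Nat.cast_one, inv_one,
    pow_zero, one_mul, iteratedDeriv_zero, hh0, mul_zero, sub_zero] at hshift
  have hfun : (fun n : ℕ => z ^ (n + 1) / (Nat.factorial (n + 1) : ℂ) *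
        iteratedDeriv n (fun w => deriv H w * (φ w) ^ (n + 1)) 0)
      = fun n : ℕ => ((Nat.factorial (n+1) : ℂ))⁻¹ * (z ^ (n+1) * iteratedDeriv (n+1) h 0) := by
    funext k
    rw [core hφ hφ0 hψdef h_an hh0 hHeq k]
    ring
  rw [hfun]
  exact hshift
end

section
/- Let d ≥ 1, let ε_1 < ... < ε_d and ϱ_1, ..., ϱ_d be positive reals, λ ∈ ℝ \ {0}, N > 0, and J(z) = z - (λ/N)Σ_{k=1}^d ϱ_k/(ε_k + z). Suppose J'(ε_k) ≠ 0 for all k and set r_k = ϱ_k J'(ε_k). Assume the values J(ε_1), ..., J(ε_d) are pairwise distinct, and for v in a neighbourhood of ℝ₊ let v̂^1, ..., v̂^d be the roots of J(z) = J(v) other than v. Define G(u, v) = (1/(J(v) - J(-u))) · Π_{k=1}^d (J(u) - J(-v̂^k))/(J(u) - J(ε_k)). Then G(u, v) = (1/(J(v) - J(-u))) · (1 + (λ/N) Σ_{k=1}^d r_k G(ε_k, v)/(J(ε_k) - J(u))). -/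
open Finset

open Polynomial in
private lemma stmt11_key (n : ℕ) (y : ℝ) (x c : Fin n → ℝ)
    (hxy : ∀ k, y ≠ x k) (hx : ∀ k l : Fin n, k ≠ l → x k ≠ x l) :
    (∏ k, (y - c k)) / (∏ k, (y - x k))
      + ∑ a, (∏ k, (x a - c k)) / ((x a - y) * ∏ j ∈ univ.erase a, (x a - x j)) = 1 := by
  classical
  set w : Fin (n + 1) → ℝ := Fin.cons y x with hw
  have hinj : Function.Injective w := by
    intro i j hij
    induction i using Fin.cases with
    | zero =>
      induction j using Fin.cases with
      | zero => rfl
      | succ j =>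
        simp only [hw, Fin.cons_zero, Fin.cons_succ] at hij
        exact absurd hij (hxy j)
    | succ i =>
      induction j using Fin.cases with
      | zero =>
        simp only [hw, Fin.cons_zero, Fin.cons_succ] at hij
        exact absurd hij.symm (hxy i)
      | succ j =>
        simp only [hw, Fin.cons_succ] at hij
        by_contra h
        exact hx i j (fun e => h (by rw [e])) hij
  set f : ℝ[X] := ∏ k : Fin n, (X - C (c k)) with hf
  have hfm : f.Monic := monic_prod_of_monic _ _ fun i _ => monic_X_sub_C _
  have hfd : f.natDegree = n := by
    rw [hf, natDegree_prod _ _ fun i _ => X_sub_C_ne_zero (c i)]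
    simp
  have hdeg : f.degree < ((univ : Finset (Fin (n + 1))).card : WithBot ℕ) := by
    rw [degree_eq_natDegree hfm.ne_zero, hfd]
    simp only [card_univ, Fintype.card_fin]
    exact_mod_cast Nat.lt_succ_self n
  have hI := Lagrange.eq_interpolate (f := f) hinj.injOn hdeg
  have hcoeff := congrArg (fun p : ℝ[X] => p.coeff n) hI
  simp only [Lagrange.interpolate_apply, finset_sum_coeff, coeff_C_mul] at hcoeff
  have hb : ∀ j : Fin (n + 1), (Lagrange.basis univ w j).coeff n
      = ∏ i ∈ univ.erase j, (w j - w i)⁻¹ := by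
    intro j
    have hnd : (Lagrange.basis univ w j).natDegree = n := by
      rw [Lagrange.natDegree_basis hinj.injOn (mem_univ j)]
      simp
    have h2 := coeff_natDegree (p := Lagrange.basis univ w j)
    rw [hnd] at h2
    rw [h2, Lagrange.basis, leadingCoeff_prod]
    refine prod_congr rfl fun i hi => ?_
    rw [Lagrange.basisDivisor, leadingCoeff_mul, leadingCoeff_C,
      (monic_X_sub_C (w i)).leadingCoeff, mul_one]
  simp only [hb] at hcoeff
  have hev : ∀ j : Fin (n + 1), f.eval (w j) = ∏ k, (w j - c k) := by
    intro j; simp [hf, eval_prod]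
  simp only [hev] at hcoeff
  have h1 : f.coeff n = 1 := by rw [← hfd, hfm.coeff_natDegree]
  rw [h1] at hcoeff
  have he0 : (univ : Finset (Fin (n + 1))).erase 0
      = univ.map ⟨Fin.succ, Fin.succ_injective n⟩ := by
    rw [Fin.univ_succ, erase_cons]
  have hes : ∀ a : Fin n, (univ : Finset (Fin (n + 1))).erase a.succ
      = Finset.cons 0 ((univ.erase a).map ⟨Fin.succ, Fin.succ_injective n⟩)
        (by simp) := by
    intro a
    ext i
    induction i using Fin.cases with
    | zero => simp [(Fin.succ_ne_zero a).symm]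
    | succ i => simp [Fin.succ_ne_zero, Fin.succ_inj]
  rw [hcoeff, Fin.sum_univ_succ, he0, prod_map]
  simp only [hes, prod_cons, prod_map, Function.Embedding.coeFn_mk]
  simp only [hw, Fin.cons_zero, Fin.cons_succ]
  congr 1
  · rw [div_eq_mul_inv, prod_inv_distrib]
  · refine sum_congr rfl fun a _ => ?_
    rw [div_eq_mul_inv, mul_inv, prod_inv_distrib]


/-- Equation (3.30) of the paper: the representation of the planar two-point
function `G(u,v)` as `(1/(J(v)-J(-u)))(1 + (λ/N) Σ_k r_k G(ε_k,v)/(J(ε_k)-J(u)))`,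
where `G(ε_k, v)` stands for the limit value of `G(u, v)` at `u = ε_k`. -/
theorem stmt11 (d : ℕ) (hd : 1 ≤ d) (ε ϱ : Fin d → ℝ)
    (hε : ∀ k, 0 < ε k) (hεmono : StrictMono ε) (hϱ : ∀ k, 0 < ϱ k)
    (lam N : ℝ) (hlam : lam ≠ 0) (hN : 0 < N)
    (J : ℝ → ℝ) (hJ : ∀ z, J z = z - (lam / N) * ∑ k, ϱ k / (ε k + z))
    (hJ' : ∀ k, deriv J (ε k) ≠ 0)
    (r : Fin d → ℝ) (hr : ∀ k, r k = ϱ k * deriv J (ε k))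
    (hJdist : ∀ k l, k ≠ l → J (ε k) ≠ J (ε l))
    (v : ℝ) (hv : 0 ≤ v)
    (vh : Fin d → ℝ) (hroot : ∀ k, J (vh k) = J v) (hvh : ∀ k, vh k ≠ v)
    (G : ℝ → ℝ)
    (hG : ∀ u, G u = (1 / (J v - J (-u))) *
        ∏ k, (J u - J (-vh k)) / (J u - J (ε k)))
    (Gε : Fin d → ℝ)
    (hGε : ∀ a, Gε a = -(N / (lam * r a)) *
        (∏ k, (J (ε a) - J (-vh k))) / ∏ j ∈ Finset.univ.erase a, (J (ε a) - J (ε j)))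
    (u : ℝ) (hu1 : ∀ k, J u ≠ J (ε k)) (hu2 : J v - J (-u) ≠ 0) :
    G u = (1 / (J v - J (-u))) *
      (1 + (lam / N) * ∑ k, r k * Gε k / (J (ε k) - J u)) := by
  have hrne : ∀ a, r a ≠ 0 := fun a => by
    rw [hr]; exact mul_ne_zero (hϱ a).ne' (hJ' a)
  have hQ : ∀ a : Fin d, (∏ j ∈ univ.erase a, (J (ε a) - J (ε j))) ≠ 0 := fun a =>
    prod_ne_zero_iff.mpr fun j hj =>
      sub_ne_zero_of_ne (hJdist a j fun e => (mem_erase.mp hj).1 e.symm)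
  have hkey := stmt11_key d (J u) (fun k => J (ε k)) (fun k => J (-vh k)) hu1 hJdist
  have hterm : ∀ a : Fin d, lam / N * (r a * Gε a / (J (ε a) - J u))
      = -((∏ k, (J (ε a) - J (-vh k))) /
          ((J (ε a) - J u) * ∏ j ∈ univ.erase a, (J (ε a) - J (ε j)))) := by
    intro a
    have h1 : J (ε a) - J u ≠ 0 := sub_ne_zero_of_ne (hu1 a).symm
    have hb : lam * r a ≠ 0 := mul_ne_zero hlam (hrne a)
    rw [hGε a]
    have expand : lam / N * (r a *
          ((-(N / (lam * r a)) * ∏ k, (J (ε a) - J (-vh k))) /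
            ∏ j ∈ univ.erase a, (J (ε a) - J (ε j))) / (J (ε a) - J u))
        = -((lam * r a * N) / (N * (lam * r a)) *
            ((∏ k, (J (ε a) - J (-vh k))) *
              ((J (ε a) - J u)⁻¹ * (∏ j ∈ univ.erase a, (J (ε a) - J (ε j)))⁻¹))) := by
      ring
    rw [expand, show (lam * r a * N) / (N * (lam * r a)) = 1 by
      rw [mul_comm N (lam * r a)]; exact div_self (mul_ne_zero hb hN.ne'), one_mul,
      div_eq_mul_inv, mul_inv]
  rw [hG u]
  congr 1
  rw [prod_div_distrib, Finset.mul_sum]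
  rw [sum_congr rfl fun a _ => hterm a, Finset.sum_neg_distrib]
  linarith [hkey]
end

section
/- With the setup of the rational function J(z) = z - (λ/N)Σ_{k=1}^d ϱ_k/(ε_k + z) and G(u, v) = (1/(J(v) - J(-u))) · Π_{k=1}^d (J(u) - J(-v̂^k))/(J(u) - J(ε_k)), where v̂^1, ..., v̂^d are the roots of J(·) = J(v) other than v: the limit of G(u, v) as u → ε_a equals -(N/(λ r_a)) · Π_{k=1}^d (J(ε_a) - J(-v̂^k)) / Π_{j≠a, j=1}^d (J(ε_a) - J(ε_j)), where r_a = ϱ_a J'(ε_a). -/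
open Finset Filter

/-- Corollary 3.9 (first part): the limit of `G(u, v)` as `u → ε_a`. -/
theorem stmt12 (d : ℕ) (hd : 1 ≤ d) (ε ϱ : Fin d → ℝ)
    (hε : ∀ k, 0 < ε k) (hεmono : StrictMono ε) (hϱ : ∀ k, 0 < ϱ k)
    (lam N : ℝ) (hlam : lam ≠ 0) (hN : 0 < N)
    (J : ℝ → ℝ) (hJ : ∀ z, J z = z - (lam / N) * ∑ k, ϱ k / (ε k + z))
    (hJdist : ∀ k l, k ≠ l → J (ε k) ≠ J (ε l))
    (v : ℝ) (hv : 0 ≤ v) (hvpole : ∀ k, v ≠ -ε k)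
    (vh : Fin d → ℝ) (hroot : ∀ k, J (vh k) = J v) (hvh : ∀ k, vh k ≠ v)
    (G : ℝ → ℝ)
    (hG : ∀ u, G u = (1 / (J v - J (-u))) *
        ∏ k, (J u - J (-vh k)) / (J u - J (ε k)))
    (a : Fin d) (hJ'a : deriv J (ε a) ≠ 0)
    (r : ℝ) (hra : r = ϱ a * deriv J (ε a)) :
    Tendsto G (nhdsWithin (ε a) {x : ℝ | x ≠ ε a})
      (nhds (-(N / (lam * r)) *
        (∏ k, (J (ε a) - J (-vh k))) /
          ∏ j ∈ Finset.univ.erase a, (J (ε a) - J (ε j)))) := by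
  have hN' : N ≠ 0 := ne_of_gt hN
  set c : ℝ := lam / N with hc
  have hc0 : c ≠ 0 := div_ne_zero hlam hN'
  have hJf : J = fun z => z - c * ∑ k, ϱ k / (ε k + z) := funext hJ
  have hεa_ne : ∀ k : Fin d, ε k + ε a ≠ 0 := fun k => by
    have := hε k; have := hε a; positivity
  -- differentiability and continuity of J at ε a
  have hdiff : DifferentiableAt ℝ J (ε a) := by
    rw [hJf]
    apply DifferentiableAt.sub differentiableAt_fun_id
    apply DifferentiableAt.const_mul
    apply DifferentiableAt.fun_sum
    intro k _
    exact (differentiableAt_const _).div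
      ((differentiableAt_const _).add differentiableAt_fun_id) (hεa_ne k)
  have hcont : ContinuousAt J (ε a) := hdiff.continuousAt
  -- slope limit (f2)
  have hslope : Tendsto (fun u => (J u - J (ε a)) / (u - ε a))
      (nhdsWithin (ε a) {x : ℝ | x ≠ ε a}) (nhds (deriv J (ε a))) := by
    have h := hdiff.hasDerivAt
    rw [hasDerivAt_iff_tendsto_slope] at h
    refine h.congr fun u => ?_
    simp [slope_def_field, div_eq_inv_mul]
  -- f1 limit
  have hf1 : Tendsto (fun u => (ε a - u) * (J v - J (-u)))
      (nhdsWithin (ε a) {x : ℝ | x ≠ ε a}) (nhds (c * ϱ a)) := by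
    have hkne : ∀ k ∈ Finset.univ.erase a, ε k - ε a ≠ 0 := by
      intro k hk
      exact sub_ne_zero.mpr fun h => (Finset.mem_erase.mp hk).1 (hεmono.injective h)
    have h1 : ContinuousAt (fun u : ℝ => (ε a - u) * (J v + u) + c * ϱ a) (ε a) := by
      fun_prop
    have h2 : ContinuousAt (fun u : ℝ =>
        ∑ k ∈ Finset.univ.erase a, (ε a - u) * (ϱ k / (ε k - u))) (ε a) :=
      tendsto_finset_sum _ fun k hk =>
        ((continuousAt_const.sub continuousAt_id).mul
          (continuousAt_const.div (continuousAt_const.sub continuousAt_id) (hkne k hk)))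
    have hgc : ContinuousAt (fun u => (ε a - u) * (J v + u) + c * ϱ a +
        c * ∑ k ∈ Finset.univ.erase a, (ε a - u) * (ϱ k / (ε k - u))) (ε a) :=
      h1.add (continuousAt_const.mul h2)
    have hval : (ε a - ε a) * (J v + ε a) + c * ϱ a +
        c * ∑ k ∈ Finset.univ.erase a, (ε a - ε a) * (ϱ k / (ε k - ε a)) = c * ϱ a := by
      simp
    have htg := hgc.tendsto.mono_left (nhdsWithin_le_nhds
      (s := {x : ℝ | x ≠ ε a}))
    rw [hval] at htg
    refine htg.congr' ?_
    filter_upwards [eventually_mem_nhdsWithin] with u hu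
    have hu' : ε a - u ≠ 0 := sub_ne_zero.mpr (Ne.symm hu)
    have hJu : J (-u) = -u - c * ∑ k, ϱ k / (ε k - u) := by
      rw [hJ (-u)]
      simp only [← sub_eq_add_neg]
    rw [hJu]
    have hsum : (ε a - u) * ∑ k, ϱ k / (ε k - u)
        = ϱ a + ∑ k ∈ Finset.univ.erase a, (ε a - u) * (ϱ k / (ε k - u)) := by
      rw [Finset.mul_sum]
      rw [← Finset.add_sum_erase Finset.univ (fun k => (ε a - u) * (ϱ k / (ε k - u)))
        (Finset.mem_univ a)]
      congr 1
      rw [mul_comm, div_mul_cancel₀ _ hu']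
    have : (ε a - u) * (J v - (-u - c * ∑ k, ϱ k / (ε k - u)))
        = (ε a - u) * (J v + u) + c * ((ε a - u) * ∑ k, ϱ k / (ε k - u)) := by ring
    rw [this, hsum]
    ring
  -- product limits
  have hP : Tendsto (fun u => ∏ k, (J u - J (-vh k)))
      (nhdsWithin (ε a) {x : ℝ | x ≠ ε a}) (nhds (∏ k, (J (ε a) - J (-vh k)))) := by
    apply Tendsto.mono_left ?_ (nhdsWithin_le_nhds (s := {x : ℝ | x ≠ ε a}))
    exact tendsto_finset_prod _ fun k _ => hcont.tendsto.sub tendsto_const_nhds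
  have hQ : Tendsto (fun u => ∏ j ∈ Finset.univ.erase a, (J u - J (ε j)))
      (nhdsWithin (ε a) {x : ℝ | x ≠ ε a})
      (nhds (∏ j ∈ Finset.univ.erase a, (J (ε a) - J (ε j)))) := by
    apply Tendsto.mono_left ?_ (nhdsWithin_le_nhds (s := {x : ℝ | x ≠ ε a}))
    exact tendsto_finset_prod _ fun k _ => hcont.tendsto.sub tendsto_const_nhds
  have hQ0 : (∏ j ∈ Finset.univ.erase a, (J (ε a) - J (ε j))) ≠ 0 := by
    apply Finset.prod_ne_zero_iff.mpr
    intro j hj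
    exact sub_ne_zero.mpr (hJdist a j fun h => (Finset.mem_erase.mp hj).1 h.symm)
  -- denominator limit nonzero
  have hL0 : (c * ϱ a) * deriv J (ε a) ≠ 0 :=
    mul_ne_zero (mul_ne_zero hc0 (hϱ a).ne') hJ'a
  -- assemble
  have h12 : Tendsto (fun u => ((ε a - u) * (J v - J (-u))) *
      ((J u - J (ε a)) / (u - ε a)))
      (nhdsWithin (ε a) {x : ℝ | x ≠ ε a}) (nhds ((c * ϱ a) * deriv J (ε a))) :=
    hf1.mul hslope
  have hfull : Tendsto (fun u => -(1 / (((ε a - u) * (J v - J (-u))) *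
      ((J u - J (ε a)) / (u - ε a)))) * (∏ k, (J u - J (-vh k))) /
      ∏ j ∈ Finset.univ.erase a, (J u - J (ε j)))
      (nhdsWithin (ε a) {x : ℝ | x ≠ ε a})
      (nhds (-(1 / ((c * ϱ a) * deriv J (ε a))) * (∏ k, (J (ε a) - J (-vh k))) /
        ∏ j ∈ Finset.univ.erase a, (J (ε a) - J (ε j)))) :=
    (((tendsto_const_nhds.div h12 hL0).neg.mul hP).div hQ hQ0)
  have hval : -(1 / ((c * ϱ a) * deriv J (ε a))) = -(N / (lam * r)) := by
    rw [hra, hc]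
    field_simp
  rw [hval] at hfull
  refine hfull.congr' ?_
  filter_upwards [eventually_mem_nhdsWithin] with u hu
  have hs : u - ε a ≠ 0 := sub_ne_zero.mpr hu
  rw [hG u, Finset.prod_div_distrib,
    ← Finset.mul_prod_erase Finset.univ (fun k => J u - J (ε k)) (Finset.mem_univ a)]
  rw [show ((ε a - u) * (J v - J (-u))) * ((J u - J (ε a)) / (u - ε a))
      = -((J v - J (-u)) * (J u - J (ε a))) from by field_simp; ring]
  simp only [one_div, div_eq_mul_inv, mul_inv_rev, inv_neg, neg_neg]
  ring
end
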